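/- arXiv:1905.08294 — 7 statements merged into one kernel-verified Lean document; each statement's English description precedes it below -/
import Mathlib

section
/- A formula φ(x;y) is an equation for a complete theory T if and only if there is no model M of T and no sequence (a_i, b_i)_{i∈ℕ} in M such that M ⊨ φ(a_i, b_j) for all i < j and M ⊭ φ(a_i, b_i) for all i. -/
open FirstOrder FirstOrder.Language Set

universe u v w

namespace Equationality

variable {L : FirstOrder.Language.{u, v}}

section Struc
variable {M : Type w} [L.Structure M]

/-- The instance of the formula `φ(x; y)` at the parameter tuple `b`. -/
def instSet {α β : Type*} (φ : L.Formula (α ⊕ β)) (b : β → M) : Set (α → M) :=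
  {a | φ.Realize (Sum.elim a b)}

/-- A sequence of `γ`-tuples indexed by a linear order is indiscernible if any two strictly
increasing finite subsequences satisfy the same formulas. -/
def IsIndiscernible {I : Type*} [LinearOrder I] {γ : Type*} (a : I → γ → M) : Prop :=
  ∀ (n : ℕ) (i j : Fin n → I), StrictMono i → StrictMono j →
    ∀ φ : L.Formula (Fin n × γ),
      φ.Realize (fun p => a (i p.1) p.2) ↔ φ.Realize (fun p => a (j p.1) p.2)

/-- The complete type of a tuple over `∅`, as the set of formulas it realizes. -/
def typeOf {γ : Type*} (a : γ → M) : Set (L.Formula γ) := {φ | φ.Realize a}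

end Struc

variable (T : L.Theory)

/-- `φ(x; y)` is an equation for `T`: in every model of `T`, the family of finite
intersections of instances of `φ` has the descending chain condition. -/
def IsEquation {α β : Type*} (φ : L.Formula (α ⊕ β)) : Prop :=
  ∀ (M : Theory.ModelType.{u, v, max u v} T) (B : ℕ → Finset (β → M)),
    (Antitone fun n => ⋂ b ∈ B n, instSet φ b) →
    ∃ N, ∀ n, N ≤ n → (⋂ b ∈ B n, instSet φ b) = ⋂ b ∈ B N, instSet φ b

/-- A complete type over `∅` (in the variables `γ`), presented as the set of formulas
realized by some tuple in some model of `T`. -/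
def IsRealizedType {γ : Type*} (p : Set (L.Formula γ)) : Prop :=
  ∃ (M : Theory.ModelType.{u, v, max u v} T) (a : γ → M), typeOf a = p

/-- `p ⟶ q`: there are a model of `T`, a tuple `b` and an indiscernible sequence `(aᵢ)`
with `aᵢ ⊨ p(x, b)` for `i > 0` and `a₀ ⊨ q(x, b)`. -/
def Pf {α β : Type*} (p q : Set (L.Formula (α ⊕ β))) : Prop :=
  ∃ (M : Theory.ModelType.{u, v, max u v} T) (b : β → M) (a : ℕ → α → M),
    IsIndiscernible (L := L) a ∧ (∀ i : ℕ, 0 < i → typeOf (Sum.elim (a i) b) = p) ∧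
      typeOf (Sum.elim (a 0) b) = q

/-! A failure of the descending chain condition in a model yields a strictly decreasing chain of
finite intersections `Xₖ`; choosing `aₖ ∈ Xₖ \ Xₖ₊₁` and a parameter `bₖ` of `Xₖ₊₁` with
`¬ φ(aₖ, bₖ)` gives `φ(aᵢ, bⱼ)` for `j < i`. Conversely such a sequence makes
`⋂_{j < n} φ(x, bⱼ)` strictly decreasing. Sequences with `φ(aᵢ, bⱼ)` for `j < i` and for `i < j`
are exchanged by reading both backwards from a nonstandard index, in an ultrapower. -/

section Ladder
variable {M : Type w} [L.Structure M] {α β : Type*}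

def IsLadder (φ : L.Formula (α ⊕ β)) (r : ℕ → ℕ → Prop) (a : ℕ → α → M) (b : ℕ → β → M) :
    Prop :=
  (∀ i j, r i j → φ.Realize (Sum.elim (a i) (b j))) ∧ ∀ i, ¬ φ.Realize (Sum.elim (a i) (b i))

open Classical in
theorem IsLadder.strictAnti_iInter {φ : L.Formula (α ⊕ β)} {a : ℕ → α → M} {b : ℕ → β → M}
    (h : IsLadder φ (· > ·) a b) :
    StrictAnti fun n => ⋂ c ∈ (Finset.range n).image b, instSet φ c := by
  refine strictAnti_nat_of_succ_lt fun n => ?_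
  simp only [Finset.set_biInter_finset_image, Finset.range_add_one, Finset.set_biInter_insert]
  refine ssubset_of_subset_not_subset inter_subset_right fun hsub => h.2 n ?_
  have han : a n ∈ ⋂ j ∈ Finset.range n, instSet φ (b j) :=
    mem_iInter₂.2 fun j hj => h.1 n j (Finset.mem_range.1 hj)
  exact (hsub han).1

theorem exists_isLadder_of_strictAnti {φ : L.Formula (α ⊕ β)} {B : ℕ → Finset (β → M)}
    (hB : StrictAnti fun n => ⋂ c ∈ B n, instSet φ c) :
    ∃ (a : ℕ → α → M) (b : ℕ → β → M), IsLadder φ (· > ·) a b := by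
  have hstep : ∀ n, ∃ a, a ∈ ⋂ c ∈ B n, instSet φ c ∧ ∃ c ∈ B (n + 1), a ∉ instSet φ c := by
    intro n
    obtain ⟨a, han, hnot⟩ := exists_of_ssubset (hB n.lt_succ_self)
    simp only [mem_iInter, not_forall] at hnot
    obtain ⟨c, hc, hac⟩ := hnot
    exact ⟨a, han, c, hc, hac⟩
  choose a ha b hb hab using hstep
  refine ⟨a, b, fun i j hji => ?_, hab⟩
  exact mem_iInter₂.1 (hB.antitone (Nat.succ_le_of_lt hji) (ha i)) (b j) (hb j)

theorem exists_isLadder_gt_iff {φ : L.Formula (α ⊕ β)} :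
    (∃ (a : ℕ → α → M) (b : ℕ → β → M), IsLadder φ (· > ·) a b) ↔
      ∃ B : ℕ → Finset (β → M), StrictAnti fun n => ⋂ c ∈ B n, instSet φ c := by
  classical
  exact ⟨fun ⟨_, b, h⟩ => ⟨_, h.strictAnti_iInter⟩, fun ⟨_, hB⟩ => exists_isLadder_of_strictAnti hB⟩

end Ladder

theorem exists_strictAnti_comp_of_not_eventually_const {γ : Type*} [PartialOrder γ] {X : ℕ → γ}
    (hX : Antitone X) (h : ¬ ∃ N, ∀ n, N ≤ n → X n = X N) : ∃ g : ℕ → ℕ, StrictAnti (X ∘ g) := by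
  push Not at h
  have hdrop : ∀ N, ∃ n, X n < X N := fun N =>
    let ⟨n, hn, hne⟩ := h N
    ⟨n, lt_of_le_of_ne (hX hn) hne⟩
  choose f hf using hdrop
  refine ⟨fun k => f^[k] 0, strictAnti_nat_of_succ_lt fun k => ?_⟩
  simpa only [Function.comp_apply, Function.iterate_succ_apply'] using hf _

theorem isEquation_iff_not_exists_strictAnti {α β : Type*} (φ : L.Formula (α ⊕ β)) :
    IsEquation T φ ↔ ¬ ∃ (M : Theory.ModelType.{u, v, max u v} T) (B : ℕ → Finset (β → M)),
      StrictAnti fun n => ⋂ c ∈ B n, instSet φ c := by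
  refine ⟨fun hEq ⟨M, B, hB⟩ => ?_, fun h M B hB => ?_⟩
  · obtain ⟨N, hN⟩ := hEq M B hB.antitone
    exact (hB N.lt_succ_self).ne (hN _ N.le_succ)
  · by_contra hne
    obtain ⟨g, hg⟩ := exists_strictAnti_comp_of_not_eventually_const hB hne
    exact h ⟨M, B ∘ g, hg⟩

/-- `M'` is the ultrapower of `M` along `U`; this is Łoś's theorem. -/
theorem exists_model_realize_iff_eventually {α β : Type (max u v)} {κ μ : Type*} {ι : Type}
    (φ : L.Formula (α ⊕ β)) (U : Ultrafilter ι) (M : Theory.ModelType.{u, v, max u v} T)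
    (a : κ → ι → α → M) (b : μ → ι → β → M) :
    ∃ (M' : Theory.ModelType.{u, v, max u v} T) (a' : κ → α → M') (b' : μ → β → M'),
      ∀ i j, φ.Realize (Sum.elim (a' i) (b' j)) ↔
        ∀ᶠ n in (U : Filter ι), φ.Realize (Sum.elim (a i n) (b j n)) := by
  let P := (U : Filter ι).Product fun _ => (M : Type (max u v))
  have : T.Model P := (Theory.model_iff _).2 fun ψ hψ =>
    (Ultraproduct.sentence_realize ψ).2 (.of_forall fun _ => M.is_model.realize_of_mem ψ hψ)
  refine ⟨⟨P⟩, fun i x => (fun n => a i n x : ∀ _, M), fun j y => (fun n => b j n y : ∀ _, M),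
    fun i j => ?_⟩
  refine (iff_of_eq (congrArg (φ.Realize (M := P)) ?_)).trans
    ((Ultraproduct.realize_formula_cast φ (Sum.elim (fun x n => a i n x) fun y n => b j n y)).trans
      (Filter.eventually_congr (.of_forall fun n => iff_of_eq (congrArg φ.Realize ?_))))
  all_goals funext s; cases s <;> rfl

theorem exists_isLadder_lt_iff_gt {α β : Type (max u v)} (φ : L.Formula (α ⊕ β)) :
    (∃ (M : Theory.ModelType.{u, v, max u v} T) (a : ℕ → α → M) (b : ℕ → β → M),
      IsLadder φ (· < ·) a b) ↔
    ∃ (M : Theory.ModelType.{u, v, max u v} T) (a : ℕ → α → M) (b : ℕ → β → M),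
      IsLadder φ (· > ·) a b := by
  constructor <;>
  · rintro ⟨M, a, b, hr, hdiag⟩
    obtain ⟨M', a', b', hM'⟩ := exists_model_realize_iff_eventually T φ (Filter.hyperfilter ℕ) M
      (fun i n => a (n - i)) (fun j n => b (n - j))
    refine ⟨M', a', b', fun i j hij => (hM' i j).2 ?_, fun i hi => ?_⟩
    · exact Nat.hyperfilter_le_atTop
        (Filter.eventually_atTop.2 ⟨max i j, fun n hn => hr _ _ (by omega)⟩)
    · obtain ⟨n, hn⟩ := ((hM' i i).1 hi).exists
      exact hdiag _ hn

theorem isEquation_iff_no_sequence {α β : Type (max u v)} (φ : L.Formula (α ⊕ β)) :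
    IsEquation T φ ↔
      ¬ ∃ (M : Theory.ModelType.{u, v, max u v} T) (a : ℕ → α → M) (b : ℕ → β → M),
        (∀ i j : ℕ, i < j → φ.Realize (Sum.elim (a i) (b j))) ∧
          ∀ i : ℕ, ¬ φ.Realize (Sum.elim (a i) (b i)) :=
  (isEquation_iff_not_exists_strictAnti T φ).trans <| not_congr <|
    (exists_congr fun _ => exists_isLadder_gt_iff.symm).trans (exists_isLadder_lt_iff_gt T φ).symm

end Equationality
end

section
/- Finite conjunctions and finite disjunctions of equations are again equations. -/
/-!
Fix a model. The finite intersections `⋂ᵢ Xᵢ` of instances of `φ₁, …, φₙ` form an `∩`-closed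
family with the descending chain condition: if `⋂ᵢ Yᵢ ⊊ ⋂ᵢ Xᵢ`, then `(Xᵢ ∩ Yᵢ)ᵢ` lies strictly
below `(Xᵢ)ᵢ` in the finite product of the single-formula families, each of which has the DCC.
Instances of the conjunction belong to this family, instances of the disjunction are finite
unions of its members by distributivity, and finite unions of members of an `∩`-closed family
with the DCC again have the DCC: if `W' ⊊ W = A₁ ∪ ⋯ ∪ Aₖ`, replacing every `Aⱼ ⊄ W'` by its
traces `Aⱼ ∩ D` on the pieces `D` of `W'` represents `W'` by a multiset below `{A₁, …, Aₖ}` in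
the Dershowitz–Manna order.
-/

open FirstOrder FirstOrder.Language Set

universe u v w

namespace Equationality

variable {L : FirstOrder.Language.{u, v}}

variable (T : L.Theory)

/-- The conjunction of the formulas `f i`, `i ∈ s` (the older Mathlib `BoundedFormula.iInf`). -/
noncomputable def finsetIInf {α β : Type*} {n : ℕ} (s : Finset β) (f : β → L.BoundedFormula α n) :
    L.BoundedFormula α n :=
  (s.toList.map f).foldr (· ⊓ ·) ⊤

/-- The disjunction of the formulas `f i`, `i ∈ s` (the older Mathlib `BoundedFormula.iSup`). -/
noncomputable def finsetISup {α β : Type*} {n : ℕ} (s : Finset β) (f : β → L.BoundedFormula α n) :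
    L.BoundedFormula α n :=
  (s.toList.map f).foldr (· ⊔ ·) ⊥

theorem _root_.Multiset.inf_sup_map_eq {α ι : Type*} [DistribLattice α] [OrderBot α] (a : α)
    (m : Multiset ι) (f : ι → α) : a ⊓ (m.map f).sup = (m.map fun i => a ⊓ f i).sup := by
  induction m using Multiset.induction with
  | empty => simp
  | cons i m ih => simp [inf_sup_left, ih]

section InfClosedFamilies

variable {α : Type*}

theorem _root_.exists_isDershowitzMannaLT_of_sup_lt [DistribLattice α] [OrderBot α] {C : Set α}
    (hC : InfClosed C) {m m' : Multiset C}
    (h : (m'.map Subtype.val).sup < (m.map Subtype.val).sup) :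
    ∃ m'' : Multiset C, m''.IsDershowitzMannaLT m ∧
      (m''.map Subtype.val).sup = (m'.map Subtype.val).sup := by
  classical
  set b := (m'.map Subtype.val).sup
  set kept := m.filter fun A => A.1 ≤ b
  set cut := m.filter fun A => ¬ A.1 ≤ b
  -- each piece `A` of `m` not below `b` is replaced by the pieces `A ⊓ D`, `D ∈ m'`
  set pieces := cut.bind fun A => m'.map fun D => (⟨A.1 ⊓ D.1, hC A.2 D.2⟩ : C)
  have mem_pieces {x} (hx : x ∈ pieces) : ∃ A ∈ cut, ∃ D ∈ m', x.1 = A.1 ⊓ D.1 := by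
    obtain ⟨A, hA, hx⟩ := Multiset.mem_bind.1 hx
    obtain ⟨D, hD, rfl⟩ := Multiset.mem_map.1 hx
    exact ⟨A, hA, D, hD, rfl⟩
  have le_b {D} (hD : D ∈ m') : D.1 ≤ b := Multiset.le_sup (Multiset.mem_map_of_mem _ hD)
  have le_sup {x} (hx : x ∈ kept + pieces) : x.1 ≤ ((kept + pieces).map Subtype.val).sup :=
    Multiset.le_sup (Multiset.mem_map_of_mem _ hx)
  refine ⟨kept + pieces, ⟨kept, pieces, cut, ?_, rfl, (Multiset.filter_add_not _ _).symm, ?_⟩, ?_⟩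
  · intro hcut
    refine h.not_ge (Multiset.sup_le.2 ?_)
    simp only [Multiset.mem_map]
    rintro _ ⟨A, hA, rfl⟩
    by_contra hAb
    have hA' : A ∈ cut := Multiset.mem_filter.2 ⟨hA, hAb⟩
    simp [hcut] at hA'
  · intro x hx
    obtain ⟨A, hA, D, hD, hx⟩ := mem_pieces hx
    have hAb := (Multiset.mem_filter.1 hA).2
    refine ⟨A, hA, show x.1 < A.1 from (hx ▸ inf_le_left : x.1 ≤ A.1).lt_of_ne fun hxA => hAb ?_⟩
    rw [← hxA, hx]; exact inf_le_right.trans (le_b hD)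
  refine le_antisymm ?_ ?_
  · rw [Multiset.map_add, Multiset.sup_add, sup_le_iff]
    simp only [Multiset.sup_le, Multiset.mem_map]
    refine ⟨?_, ?_⟩
    · rintro _ ⟨A, hA, rfl⟩
      exact (Multiset.mem_filter.1 hA).2
    · rintro _ ⟨x, hx, rfl⟩
      obtain ⟨A, -, D, hD, hx⟩ := mem_pieces hx
      exact hx ▸ inf_le_right.trans (le_b hD)
  calc b = b ⊓ (m.map Subtype.val).sup := (inf_eq_left.2 h.le).symm
    _ = (m.map fun A => b ⊓ A.1).sup := Multiset.inf_sup_map_eq _ _ _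
    _ ≤ _ := Multiset.sup_le.2 ?_
  simp only [Multiset.mem_map]
  rintro _ ⟨A, hA, rfl⟩
  by_cases hAb : A.1 ≤ b
  · exact inf_le_right.trans (le_sup (Multiset.mem_add.2 (.inl (Multiset.mem_filter.2 ⟨hA, hAb⟩))))
  rw [inf_comm, Multiset.inf_sup_map_eq, Multiset.sup_le]
  simp only [Multiset.mem_map]
  rintro _ ⟨D, hD, rfl⟩
  refine le_sup (x := ⟨A.1 ⊓ D.1, hC A.2 D.2⟩) (Multiset.mem_add.2 (.inr ?_))
  exact Multiset.mem_bind.2 ⟨A, Multiset.mem_filter.2 ⟨hA, hAb⟩, Multiset.mem_map_of_mem _ hD⟩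

theorem _root_.InfClosed.wellFoundedLT_range_multisetSup [DistribLattice α] [OrderBot α]
    {C : Set α} (hC : InfClosed C) [WellFoundedLT C] :
    WellFoundedLT (Set.range fun m : Multiset C => (m.map Subtype.val).sup) := by
  refine ⟨⟨?_⟩⟩
  rintro ⟨_, m, rfl⟩
  refine Acc.of_fibration (fun m : Multiset C => (⟨_, m, rfl⟩ : Set.range _)) ?_
    (Multiset.wellFounded_isDershowitzMannaLT.apply m)
  rintro m ⟨_, m', rfl⟩ hlt
  obtain ⟨m'', hdm, heq⟩ := exists_isDershowitzMannaLT_of_sup_lt hC hlt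
  exact ⟨m'', hdm, Subtype.ext heq⟩

variable [CompleteLattice α] {ι : Type*} {C : ι → Set α}

theorem _root_.infClosed_range_iInf (hC : ∀ i, InfClosed (C i)) :
    InfClosed (Set.range fun X : (∀ i, C i) => ⨅ i, (X i).1) := by
  rintro _ ⟨X, rfl⟩ _ ⟨Y, rfl⟩
  exact ⟨fun i => ⟨(X i).1 ⊓ (Y i).1, hC i (X i).2 (Y i).2⟩, iInf_inf_eq⟩

theorem _root_.wellFoundedLT_range_iInf [Finite ι] (hC : ∀ i, InfClosed (C i))
    [∀ i, WellFoundedLT (C i)] :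
    WellFoundedLT (Set.range fun X : (∀ i, C i) => ⨅ i, (X i).1) := by
  refine ⟨⟨?_⟩⟩
  rintro ⟨_, X, rfl⟩
  refine Acc.of_fibration (fun X : (∀ i, C i) => (⟨_, X, rfl⟩ : Set.range _)) ?_
    (wellFounded_lt.apply X)
  rintro X ⟨_, Y, rfl⟩ hlt
  replace hlt : ⨅ i, (Y i).1 < ⨅ i, (X i).1 := hlt
  have hXY : ⨅ i, ((X i).1 ⊓ (Y i).1) = ⨅ i, (Y i).1 :=
    iInf_inf_eq.trans (inf_eq_right.2 hlt.le)
  refine ⟨fun i => ⟨(X i).1 ⊓ (Y i).1, hC i (X i).2 (Y i).2⟩,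
    lt_of_le_of_ne (fun i => inf_le_left) fun h => hlt.ne ?_, Subtype.ext hXY⟩
  rw [← hXY]
  exact congrArg (fun Z : (∀ i, C i) => ⨅ i, (Z i).1) h

theorem _root_.WellFoundedLT.antitone_chain_condition_of_mem {β : Type*} [PartialOrder β]
    {S : Set β} [WellFoundedLT S] {f : ℕ → β} (hf : Antitone f) (hS : ∀ n, f n ∈ S) :
    ∃ N, ∀ n, N ≤ n → f n = f N := by
  obtain ⟨N, hN⟩ := WellFoundedLT.antitone_chain_condition
    (f := fun n => (⟨f n, hS n⟩ : S)) fun m n hmn => hf hmn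
  exact ⟨N, fun n hn => congrArg Subtype.val (hN n hn).symm⟩

end InfClosedFamilies

section Instances

variable {α β : Type*} (M : Type*) [L.Structure M]

def instanceInters (φ : L.Formula (α ⊕ β)) : Set (Set (α → M)) :=
  range fun B : Finset (β → M) => ⋂ b ∈ B, instSet φ b

def jointInstanceInters {γ : Type*} (s : Finset γ) (φ : γ → L.Formula (α ⊕ β)) :
    Set (Set (α → M)) :=
  range fun X : (∀ i : s, instanceInters M (φ i)) => ⨅ i, (X i).1

variable {M}

theorem infClosed_instanceInters (φ : L.Formula (α ⊕ β)) : InfClosed (instanceInters M φ) := by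
  classical
  rintro _ ⟨B, rfl⟩ _ ⟨B', rfl⟩
  exact ⟨B ∪ B', by ext; simp [or_imp, forall_and]⟩

theorem iInter_instSet_mem_instanceInters {κ : Type*} [Finite κ] (φ : L.Formula (α ⊕ β))
    (g : κ → β → M) : ⋂ k, instSet φ (g k) ∈ instanceInters M φ := by
  classical
  cases nonempty_fintype κ
  exact ⟨Finset.univ.image g, by simp⟩

theorem instSet_finsetIInf {γ : Type*} (s : Finset γ) (φ : γ → L.Formula (α ⊕ β))
    (b : β → M) : instSet (finsetIInf s φ) b = ⋂ i ∈ s, instSet (φ i) b := by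
  ext a
  simp [instSet, finsetIInf, Formula.Realize]

theorem instSet_finsetISup {γ : Type*} (s : Finset γ) (φ : γ → L.Formula (α ⊕ β))
    (b : β → M) : instSet (finsetISup s φ) b = ⋃ i ∈ s, instSet (φ i) b := by
  ext a
  simp [instSet, finsetISup, Formula.Realize]

end Instances

section Equations

variable {T} {α β : Type*} {φ : L.Formula (α ⊕ β)}

theorem IsEquation.wellFoundedLT (h : IsEquation T φ) (M : Theory.ModelType.{u, v, max u v} T) :
    WellFoundedLT (instanceInters M φ) := by
  rw [← wellFoundedGT_dual_iff, wellFoundedGT_iff_monotone_chain_condition]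
  intro a
  choose B hB using fun n => (OrderDual.ofDual (a n)).2
  replace hB : ∀ n, ⋂ b ∈ B n, instSet φ b = (OrderDual.ofDual (a n)).1 := hB
  obtain ⟨N, hN⟩ := h M B fun m n hmn => by simp only [hB]; exact a.mono hmn
  refine ⟨N, fun n hn => OrderDual.ofDual.injective (Subtype.ext ?_)⟩
  rw [← hB, ← hB, hN n hn]

theorem isEquation_of_wellFoundedLT
    (S : ∀ M : Theory.ModelType.{u, v, max u v} T, Set (Set (α → M))) [∀ M, WellFoundedLT (S M)]
    (hS : ∀ (M : Theory.ModelType.{u, v, max u v} T) (B : Finset (β → M)),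
      ⋂ b ∈ B, instSet φ b ∈ S M) :
    IsEquation T φ :=
  fun M B hB => WellFoundedLT.antitone_chain_condition_of_mem hB fun n => hS M (B n)

end Equations

section JointInstances

variable {α β γ : Type*} {M : Type*} [L.Structure M] (s : Finset γ)
  (φ : γ → L.Formula (α ⊕ β)) (B : Finset (β → M))

theorem infClosed_jointInstanceInters : InfClosed (jointInstanceInters M s φ) :=
  infClosed_range_iInf fun i => infClosed_instanceInters (φ i)

theorem wellFoundedLT_jointInstanceInters [∀ i : s, WellFoundedLT (instanceInters M (φ i))] :
    WellFoundedLT (jointInstanceInters M s φ) :=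
  wellFoundedLT_range_iInf fun i => infClosed_instanceInters (φ i)

theorem iInter_instSet_finsetIInf_mem_jointInstanceInters :
    ⋂ b ∈ B, instSet (finsetIInf s φ) b ∈ jointInstanceInters M s φ := by
  refine ⟨fun i => ⟨⋂ b ∈ B, instSet (φ i) b, B, rfl⟩, ?_⟩
  ext a
  simp only [instSet_finsetIInf, iInf_eq_iInter, mem_iInter, Subtype.forall]
  exact ⟨fun h i hi b hb => h b hb i hi, fun h b hb i hi => h i hi b hb⟩

theorem iInter_instSet_finsetISup_mem_range_sup :
    ⋂ b ∈ B, instSet (finsetISup s φ) b ∈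
      range fun m : Multiset (jointInstanceInters M s φ) => (m.map Subtype.val).sup := by
  classical
  have hmem (f : B → s) : ⋂ b : B, instSet (φ (f b)) b ∈ jointInstanceInters M s φ := by
    refine ⟨fun i => ⟨⋂ b : {b : B // f b = i}, instSet (φ i) b.1.1,
      iInter_instSet_mem_instanceInters _ _⟩, ?_⟩
    ext a
    simp only [iInf_eq_iInter, mem_iInter, Subtype.forall]
    exact ⟨fun h b hb => h _ (f ⟨b, hb⟩).2 b hb rfl,
      fun h i hi b hb hf => by simpa [hf] using h b hb⟩
  refine ⟨Finset.univ.val.map fun f : B → s => ⟨_, hmem f⟩, ?_⟩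
  dsimp only
  rw [Multiset.map_map, ← Finset.sup_def, Finset.sup_set_eq_biUnion]
  ext a
  simp only [Finset.mem_univ, Function.comp_apply, iUnion_true, mem_iUnion, mem_iInter,
    Subtype.forall, instSet_finsetISup, exists_prop]
  constructor
  · rintro ⟨f, hf⟩ b hb
    exact ⟨_, (f ⟨b, hb⟩).2, hf b hb⟩
  · intro h
    choose i hi ha using h
    exact ⟨fun b => ⟨i b.1 b.2, hi _ _⟩, ha⟩

end JointInstances

theorem isEquation_iInf_and_iSup {α β γ : Type (max u v)}
    (s : Finset γ) (φ : γ → L.Formula (α ⊕ β)) (h : ∀ i ∈ s, IsEquation T (φ i)) :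
    IsEquation T (finsetIInf s φ) ∧ IsEquation T (finsetISup s φ) := by
  have joint_wf (M : Theory.ModelType.{u, v, max u v} T) :
      WellFoundedLT (jointInstanceInters M s φ) :=
    have (i : s) := (h i i.2).wellFoundedLT M
    wellFoundedLT_jointInstanceInters s φ
  have unions_wf (M : Theory.ModelType.{u, v, max u v} T) : WellFoundedLT
      (range fun m : Multiset (jointInstanceInters M s φ) => (m.map Subtype.val).sup) :=
    (infClosed_jointInstanceInters s φ).wellFoundedLT_range_multisetSup
  exact ⟨isEquation_of_wellFoundedLT _ fun _ =>
      iInter_instSet_finsetIInf_mem_jointInstanceInters s φ,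
    isEquation_of_wellFoundedLT _ fun _ => iInter_instSet_finsetISup_mem_range_sup s φ⟩

end Equationality
end

section
/- Every equation is a stable formula, i.e., no equation has the order property. -/
open FirstOrder FirstOrder.Language Set

universe u v w

namespace Equationality

variable {L : FirstOrder.Language.{u, v}}

variable (T : L.Theory)

section ReversedOrder

variable {T}

section Ultraproduct

variable {ι : Type*} (U : Ultrafilter ι) (M : ι → Type*) [∀ i, L.Structure (M i)]
  [∀ i, Nonempty (M i)]

instance ultraproduct_model [∀ i, M i ⊨ T] : (U : Filter ι).Product M ⊨ T :=
  ⟨fun ψ hψ => (Ultraproduct.sentence_realize ψ).2 <|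
    Filter.Eventually.of_forall fun _ => Theory.realize_sentence_of_mem T hψ⟩

theorem ultraproduct_realize_sumElim {α β : Type*} (φ : L.Formula (α ⊕ β))
    (a : α → ∀ i, M i) (b : β → ∀ i, M i) :
    φ.Realize (Sum.elim (fun x => (a x : (U : Filter ι).Product M))
        (fun y => (b y : (U : Filter ι).Product M))) ↔
      ∀ᶠ i in U, φ.Realize (Sum.elim (fun x => a x i) (fun y => b y i)) := by
  have hcast : Sum.elim (fun x => (a x : (U : Filter ι).Product M))
      (fun y => (b y : (U : Filter ι).Product M)) =
      fun k => ((Sum.elim a b k : ∀ i, M i) : (U : Filter ι).Product M) := by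
    funext k; cases k <;> rfl
  rw [hcast, Ultraproduct.realize_formula_cast]
  refine Filter.eventually_congr (Filter.Eventually.of_forall fun i => ?_)
  congr! 1; funext k; cases k <;> rfl

end Ultraproduct

/-- The order can be reversed: sample the original sequences along `n ↦ n - i` and pass to
the ultrapower over an ultrafilter refining `atTop`. -/
theorem exists_reversed_order {α β : Type (max u v)} (φ : L.Formula (α ⊕ β))
    (M : Theory.ModelType.{u, v, max u v} T) (a : ℕ → α → M) (b : ℕ → β → M)
    (hab : ∀ i j, φ.Realize (Sum.elim (a i) (b j)) ↔ i < j) :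
    ∃ (N : Theory.ModelType.{u, v, max u v} T) (a' : ℕ → α → N) (b' : ℕ → β → N),
      ∀ i j, φ.Realize (Sum.elim (a' i) (b' j)) ↔ j < i := by
  let U : Ultrafilter ℕ := Ultrafilter.of Filter.atTop
  let N := (U : Filter ℕ).Product fun _ => (M : Type (max u v))
  refine ⟨⟨N⟩, fun i x => (fun n => a (n - i) x : ∀ _ : ℕ, M),
    fun j y => (fun n => b (n - j) y : ∀ _ : ℕ, M), fun i j => ?_⟩
  refine (ultraproduct_realize_sumElim U _ φ _ _).trans ?_
  simp only [hab]
  constructor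
  · intro hev
    obtain ⟨n, hn⟩ := hev.exists
    omega
  · intro hji
    exact (Filter.eventually_ge_atTop i).filter_mono (Ultrafilter.of_le _) |>.mono
      fun n hn => by omega

theorem IsEquation.not_reversed_order {α β : Type*} {φ : L.Formula (α ⊕ β)}
    (h : IsEquation T φ) (M : Theory.ModelType.{u, v, max u v} T) (a : ℕ → α → M)
    (b : ℕ → β → M) : ¬ ∀ i j, φ.Realize (Sum.elim (a i) (b j)) ↔ j < i := by
  classical
  intro hab
  let B : ℕ → Finset (β → M) := fun k => (Finset.range k).image b
  have mem_iff : ∀ x k, x ∈ ⋂ c ∈ B k, instSet φ c ↔ ∀ j < k, φ.Realize (Sum.elim x (b j)) := by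
    intro x k
    simp [B, instSet]
  have hanti : Antitone fun k => ⋂ c ∈ B k, instSet φ c := fun m n hmn x hx =>
    (mem_iff x m).2 fun j hj => (mem_iff x n).1 hx j (hj.trans_le hmn)
  obtain ⟨K, hK⟩ := h M B hanti
  have hmem : a K ∈ ⋂ c ∈ B (K + 1), instSet φ c :=
    hK (K + 1) K.le_succ ▸ (mem_iff _ K).2 fun j hj => (hab K j).2 hj
  exact lt_irrefl K ((hab K K).1 ((mem_iff _ _).1 hmem K K.lt_succ_self))

end ReversedOrder

theorem isEquation_no_order_property {α β : Type (max u v)}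
    (φ : L.Formula (α ⊕ β)) (h : IsEquation T φ) :
    ¬ ∃ (M : Theory.ModelType.{u, v, max u v} T) (a : ℕ → α → M) (b : ℕ → β → M),
        ∀ i j : ℕ, φ.Realize (Sum.elim (a i) (b j)) ↔ i < j := by
  rintro ⟨M, a, b, hab⟩
  obtain ⟨N, a', b', hrev⟩ := exists_reversed_order φ M a b hab
  exact h.not_reversed_order N a' b' hrev

end Equationality
end

section
/- A formula φ(x;y) is an equation if and only if for all complete types p(x;y) and q(x;y) over ∅ with p ⟶ q, if φ(x,y) ∈ p then φ(x,y) ∈ q. -/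
/-!
A formula φ(x; y) fails to be an equation exactly when some model of T contains a sequence
(xₖ, yₖ) with φ(xₖ, yⱼ) for j < k and ¬φ(xⱼ, yⱼ): the instances φ(x, y₀), φ(x, y₁), … then cut
out a strictly descending chain of finite intersections.

If (aᵢ), b witness p ⟶ q with φ ∈ p and φ ∉ q, indiscernibility separates each aⱼ from
aⱼ₊₁, …, aⱼ₊ₙ by an instance of φ, and compactness assembles these finite configurations into
such a sequence. Conversely, by Ramsey's theorem and compactness such a sequence can be taken
indiscernible, and then b = y₁, aᵢ = xᵢ₊₁ witness p ⟶ q with φ ∈ p and φ ∉ q.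
-/

open FirstOrder FirstOrder.Language Set

universe u v w

namespace Equationality

variable {L : FirstOrder.Language.{u, v}}

variable (T : L.Theory)

theorem exists_infinite_monochromatic {C : Type*} [Finite C] (n : ℕ) :
    ∀ (c : (Fin n → ℕ) → C) {S : Set ℕ}, S.Infinite →
      ∃ H ⊆ S, H.Infinite ∧ ∃ k, ∀ s : Fin n → ℕ, StrictMono s → range s ⊆ H → c s = k := by
  induction n with
  | zero =>
    exact fun c S hS =>
      ⟨S, subset_rfl, hS, c finZeroElim, fun s _ _ => congrArg c (funext finZeroElim)⟩
  | succ n ih =>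
    intro c S hS
    have step : ∀ S : Set ℕ, S.Infinite → ∃ H ⊆ S, H.Infinite ∧ (∀ x ∈ H, sInf S < x) ∧
        ∃ k, ∀ s : Fin n → ℕ, StrictMono s → range s ⊆ H → c (Fin.cons (sInf S) s) = k := by
      intro S hS
      obtain ⟨H, hHS, hH, k, hk⟩ := ih
        (fun s => c (Fin.cons (sInf S) s)) (hS.sdiff (finite_Iic (sInf S)))
      exact ⟨H, fun x hx => (hHS hx).1, hH, fun x hx => not_le.1 (hHS hx).2, k, hk⟩
    have : Nonempty C := ⟨c 0⟩
    choose! next hnext_sub hnext_inf hnext_gt K hK using step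
    set seq : ℕ → Set ℕ := fun m => next^[m] S
    have hseq_succ : ∀ m, seq (m + 1) = next (seq m) := fun m => Function.iterate_succ_apply' ..
    have hseq_inf : ∀ m, (seq m).Infinite := fun m => by
      induction m with
      | zero => exact hS
      | succ m ih => exact hseq_succ m ▸ hnext_inf _ ih
    have hseq_anti : Antitone seq :=
      antitone_nat_of_succ_le fun m => hseq_succ m ▸ hnext_sub _ (hseq_inf m)
    set a : ℕ → ℕ := fun m => sInf (seq m)
    have ha_mem : ∀ m, a m ∈ seq m := fun m => Nat.sInf_mem (hseq_inf m).nonempty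
    have ha_mem_succ : ∀ {m m'}, m < m' → a m' ∈ next (seq m) := fun h =>
      hseq_succ _ ▸ hseq_anti h (ha_mem _)
    have ha : StrictMono a := fun m m' h => hnext_gt _ (hseq_inf m) _ (ha_mem_succ h)
    obtain ⟨k, hk⟩ := Finite.exists_infinite_fiber fun m : ℕ => K (seq m)
    refine ⟨a '' ((fun m => K (seq m)) ⁻¹' {k}), ?_,
      (infinite_coe_iff.1 hk).image ha.injective.injOn, k, ?_⟩
    · rintro _ ⟨m, -, rfl⟩
      exact hseq_anti (Nat.zero_le m) (ha_mem m)
    · intro s hs hsH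
      choose m hm hms using fun i => hsH (mem_range_self i)
      have hm_mono : StrictMono m := fun i j hij => ha.lt_iff_lt.1 (by rw [hms, hms]; exact hs hij)
      rw [← Fin.cons_self_tail s, ← hms 0]
      refine (hK _ (hseq_inf _) (Fin.tail s) (hs.comp Fin.strictMono_succ) ?_).trans (hm 0)
      rintro _ ⟨i, rfl⟩
      simpa only [Fin.tail, ← hms] using ha_mem_succ (hm_mono i.succ_pos)

theorem exists_strictAnti_comp_of_antitone {α : Type*} [PartialOrder α] {X : ℕ → α}
    (hX : Antitone X) (h : ∀ N, ∃ n, N ≤ n ∧ X n ≠ X N) : ∃ g : ℕ → ℕ, StrictAnti (X ∘ g) := by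
  choose next hle hne using h
  refine ⟨fun k => next^[k] 0, strictAnti_nat_of_succ_lt fun k => ?_⟩
  simp only [Function.comp_apply, Function.iterate_succ_apply']
  exact lt_of_le_of_ne (hX (hle _)) (hne _)

section Sequences
variable {M : Type w} [L.Structure M] {γ : Type*}

def RealizedOnIncreasing {n : ℕ} (ψ : L.Formula (Fin n × γ)) (e : ℕ → γ → M) : Prop :=
  ∀ s : Fin n → ℕ, StrictMono s → ψ.Realize fun p => e (s p.1) p.2

theorem realize_relabel_prodMap {n : ℕ} (ψ : L.Formula (Fin n × γ)) (s : Fin n → ℕ)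
    (v : ℕ × γ → M) :
    (ψ.relabel (Prod.map s id)).Realize v ↔ ψ.Realize fun p => v (s p.1, p.2) :=
  Formula.realize_relabel

theorem exists_strictMono_homogeneous (e : ℕ → γ → M)
    (F : Finset (Σ n, L.Formula (Fin n × γ))) :
    ∃ g : ℕ → ℕ, StrictMono g ∧ ∀ ψ ∈ F, ∀ s t : Fin ψ.1 → ℕ, StrictMono s → StrictMono t →
      ((ψ.2.Realize fun p => e (g (s p.1)) p.2) ↔ ψ.2.Realize fun p => e (g (t p.1)) p.2) := by
  classical
  obtain ⟨H, hH, hF⟩ : ∃ H : Set ℕ, H.Infinite ∧ ∀ ψ ∈ F, ∃ k : Prop, ∀ s, StrictMono s →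
      range s ⊆ H → (ψ.2.Realize fun p => e (s p.1) p.2) = k := by
    induction F using Finset.induction_on with
    | empty => exact ⟨univ, infinite_univ, by simp⟩
    | insert ψ F _ ih =>
      obtain ⟨H, hH, hF⟩ := ih
      obtain ⟨H', hH'H, hH', k, hk⟩ :=
        exists_infinite_monochromatic ψ.1 (fun s => ψ.2.Realize fun p => e (s p.1) p.2) hH
      refine ⟨H', hH', (Finset.forall_mem_insert _ _ _).2 ⟨⟨k, hk⟩, fun χ hχ => ?_⟩⟩
      exact (hF χ hχ).imp fun k' hk' s hs hsH' => hk' s hs (hsH'.trans hH'H)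
  have hg := Nat.nth_strictMono hH
  have hgH : ∀ {n} (r : Fin n → ℕ), range (Nat.nth (· ∈ H) ∘ r) ⊆ H :=
    fun r => range_subset_iff.2 fun i => Nat.nth_mem_of_infinite hH _
  refine ⟨Nat.nth (· ∈ H), hg, fun ψ hψ s t hs ht => ?_⟩
  obtain ⟨k, hk⟩ := hF ψ hψ
  exact (hk _ (hg.comp hs) (hgH s)).to_iff.trans (hk _ (hg.comp ht) (hgH t)).to_iff.symm

end Sequences

theorem exists_modelType_realize_of_directed {ι : Type*} [Nonempty ι] {γ : Type (max u v)}
    {Φ : ι → Set (L.Formula γ)} (hΦ : Directed (· ⊆ ·) Φ)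
    (h : ∀ i, ∃ (M : Theory.ModelType.{u, v, max u v} T) (v : γ → M), ∀ ψ ∈ Φ i, ψ.Realize v) :
    ∃ (N : Theory.ModelType.{u, v, max u v} T) (v : γ → N), ∀ i, ∀ ψ ∈ Φ i, ψ.Realize v := by
  let S : ι → L[[γ]].Theory :=
    fun i => (L.lhomWithConstants γ).onTheory T ∪ Formula.equivSentence '' Φ i
  have hS : Directed (· ⊆ ·) S := fun i j => (hΦ i j).imp fun _ ⟨hi, hj⟩ =>
    ⟨union_subset_union_right _ (image_mono hi), union_subset_union_right _ (image_mono hj)⟩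
  obtain ⟨N⟩ := (Theory.isSatisfiable_directed_union_iff hS).2 fun i => by
    obtain ⟨M, v, hv⟩ := h i
    let _ : (constantsOn γ).Structure M := constantsOn.structure v
    have : M ⊨ S i := ((LHom.onTheory_model _ _).2 inferInstance).union
      ⟨by rintro _ ⟨ψ, hψ, rfl⟩; exact (Formula.realize_equivSentence M ψ).2 (hv ψ hψ)⟩
    exact Theory.Model.isSatisfiable M
  have hT : (L.lhomWithConstants γ).onTheory T ⊆ ⋃ i, S i :=
    subset_union_left.trans (subset_iUnion S (Classical.arbitrary ι))
  let _ : L.Structure N := (L.lhomWithConstants γ).reduct N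
  have : N ⊨ T := (LHom.onTheory_model _ _).1 (N.is_model.mono hT)
  refine ⟨.of T N, fun g => (L.con g : N), fun i ψ hψ => ?_⟩
  exact (Formula.realize_equivSentence N ψ).1
    (N.is_model.realize_of_mem _ (mem_iUnion.2 ⟨i, Or.inr ⟨ψ, hψ, rfl⟩⟩))

theorem exists_isIndiscernible_realizedOnIncreasing {γ : Type (max u v)}
    {M : Theory.ModelType.{u, v, max u v} T} (e : ℕ → γ → M) :
    ∃ (N : Theory.ModelType.{u, v, max u v} T) (f : ℕ → γ → N), IsIndiscernible (L := L) f ∧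
      ∀ n (ψ : L.Formula (Fin n × γ)), RealizedOnIncreasing ψ e → RealizedOnIncreasing ψ f := by
  let Ind : Finset (Σ n, L.Formula (Fin n × γ)) → Set (L.Formula (ℕ × γ)) := fun F =>
    {θ | ∃ ψ ∈ F, ∃ s t : Fin ψ.1 → ℕ, StrictMono s ∧ StrictMono t ∧
      θ = (ψ.2.relabel (Prod.map s id)).iff (ψ.2.relabel (Prod.map t id))}
  let EM : Set (L.Formula (ℕ × γ)) := {θ | ∃ n, ∃ ψ : L.Formula (Fin n × γ),
    RealizedOnIncreasing ψ e ∧ ∃ s, StrictMono s ∧ θ = ψ.relabel (Prod.map s id)}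
  have hdir : Directed (· ⊆ ·) fun F => Ind F ∪ EM := Monotone.directed_le fun F F' h =>
    union_subset_union_left _ fun _ ⟨ψ, hψ, hθ⟩ => ⟨ψ, Finset.mem_of_subset h hψ, hθ⟩
  obtain ⟨N, v, hv⟩ := exists_modelType_realize_of_directed T hdir fun F => by
    obtain ⟨g, hg, hF⟩ := exists_strictMono_homogeneous e F
    refine ⟨M, fun p => e (g p.1) p.2, ?_⟩
    rintro _ (⟨ψ, hψ, s, t, hs, ht, rfl⟩ | ⟨n, ψ, hψ, s, hs, rfl⟩)
    · rw [Formula.realize_iff, realize_relabel_prodMap, realize_relabel_prodMap]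
      exact hF ψ hψ s t hs ht
    · exact (realize_relabel_prodMap ..).2 (hψ _ (hg.comp hs))
  refine ⟨N, fun r g => v (r, g), fun n s t hs ht ψ => ?_, fun n ψ hψ s hs => ?_⟩
  · have := hv {⟨n, ψ⟩} _ (Or.inl ⟨⟨n, ψ⟩, Finset.mem_singleton_self _, s, t, hs, ht, rfl⟩)
    rwa [Formula.realize_iff, realize_relabel_prodMap, realize_relabel_prodMap] at this
  · exact (realize_relabel_prodMap ..).1 (hv ∅ _ (Or.inr ⟨n, ψ, hψ, s, hs, rfl⟩))

theorem exists_realizedOnIncreasing_of_forall_lt {n : ℕ} {γ : Type (max u v)}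
    (ψ : L.Formula (Fin n × γ))
    (h : ∀ m, ∃ (M : Theory.ModelType.{u, v, max u v} T) (e : ℕ → γ → M),
      ∀ s : Fin n → ℕ, StrictMono s → (∀ i, s i < m) → ψ.Realize fun p => e (s p.1) p.2) :
    ∃ (N : Theory.ModelType.{u, v, max u v} T) (f : ℕ → γ → N), RealizedOnIncreasing ψ f := by
  let Φ : ℕ → Set (L.Formula (ℕ × γ)) := fun m =>
    {θ | ∃ s : Fin n → ℕ, StrictMono s ∧ (∀ i, s i < m) ∧ θ = ψ.relabel (Prod.map s id)}
  have hdir : Directed (· ⊆ ·) Φ := Monotone.directed_le fun m m' h _ ⟨s, hs, hsm, hθ⟩ =>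
    ⟨s, hs, fun i => (hsm i).trans_le h, hθ⟩
  obtain ⟨N, v, hv⟩ := exists_modelType_realize_of_directed T hdir fun m => by
    obtain ⟨M, e, he⟩ := h m
    refine ⟨M, fun p => e p.1 p.2, ?_⟩
    rintro _ ⟨s, hs, hsm, rfl⟩
    exact (realize_relabel_prodMap ..).2 (he s hs hsm)
  refine ⟨N, fun r g => v (r, g), fun s hs => ?_⟩
  obtain ⟨m, hm⟩ := Finite.exists_le s
  exact (realize_relabel_prodMap ..).1
    (hv (m + 1) _ ⟨s, hs, fun i => Nat.lt_succ_of_le (hm i), rfl⟩)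

section Descent
variable {α β : Type*} {M : Type w} [L.Structure M]

def crossFormula (φ : L.Formula (α ⊕ β)) : L.Formula (Fin 2 × (α ⊕ β)) :=
  φ.relabel (Sum.elim (fun x => (1, Sum.inl x)) fun y => (0, Sum.inr y))

theorem realize_crossFormula (φ : L.Formula (α ⊕ β)) (g : Fin 2 → α ⊕ β → M) :
    (crossFormula φ).Realize (fun p => g p.1 p.2) ↔
      φ.Realize (Sum.elim (g 1 ∘ Sum.inl) (g 0 ∘ Sum.inr)) := by
  rw [crossFormula, Formula.realize_relabel]
  congr! 1
  ext (x | y) <;> rfl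

def descentFormula (φ : L.Formula (α ⊕ β)) : L.Formula (Fin 2 × (α ⊕ β)) :=
  crossFormula φ ⊓ (φ.relabel fun z => (0, z)).not

theorem realize_descentFormula (φ : L.Formula (α ⊕ β)) (g : Fin 2 → α ⊕ β → M) :
    (descentFormula φ).Realize (fun p => g p.1 p.2) ↔
      φ.Realize (Sum.elim (g 1 ∘ Sum.inl) (g 0 ∘ Sum.inr)) ∧ ¬φ.Realize (g 0) := by
  rw [descentFormula, Formula.realize_inf, Formula.realize_not, Formula.realize_relabel,
    realize_crossFormula]
  rfl

theorem realizedOnIncreasing_descentFormula_iff (φ : L.Formula (α ⊕ β)) (e : ℕ → α ⊕ β → M) :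
    RealizedOnIncreasing (descentFormula φ) e ↔
      ∀ j k, j < k → φ.Realize (Sum.elim (e k ∘ Sum.inl) (e j ∘ Sum.inr)) ∧ ¬φ.Realize (e j) := by
  refine ⟨fun h j k hjk => ?_, fun h s hs => ?_⟩
  · have hs : StrictMono ![j, k] := Fin.strictMono_iff_lt_succ.2 (by simpa using hjk)
    exact (realize_descentFormula φ fun i => e (![j, k] i)).1 (h _ hs)
  · exact (realize_descentFormula φ fun i => e (s i)).2 (h _ _ (hs Fin.zero_lt_one))

theorem exists_realizedOnIncreasing_descentFormula {φ : L.Formula (α ⊕ β)}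
    {C : ℕ → Finset (β → M)} (hC : StrictAnti fun k => ⋂ b ∈ C k, instSet φ b) :
    ∃ e : ℕ → α ⊕ β → M, RealizedOnIncreasing (descentFormula φ) e := by
  have : ∀ k, ∃ z b, b ∈ C (k + 1) ∧ z ∈ ⋂ b ∈ C k, instSet φ b ∧ ¬φ.Realize (Sum.elim z b) := by
    intro k
    obtain ⟨z, hz, hz'⟩ := exists_of_ssubset (hC k.lt_succ_self)
    simp only [mem_iInter, not_forall] at hz'
    obtain ⟨b, hb, hzb⟩ := hz'
    exact ⟨z, b, hb, hz, hzb⟩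
  choose z b hb hz hzb using this
  refine ⟨fun k => Sum.elim (z k) (b k),
    (realizedOnIncreasing_descentFormula_iff φ _).2 fun j k hjk => ⟨?_, hzb j⟩⟩
  simp only [Sum.elim_comp_inl, Sum.elim_comp_inr]
  exact mem_iInter₂.1 (hC.antitone hjk (hz k)) (b j) (hb j)

end Descent

theorem isEquation_iff_forall_not_realizedOnIncreasing {α β : Type*} (φ : L.Formula (α ⊕ β)) :
    IsEquation T φ ↔ ∀ (M : Theory.ModelType.{u, v, max u v} T) (e : ℕ → α ⊕ β → M),
      ¬RealizedOnIncreasing (descentFormula φ) e := by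
  classical
  refine ⟨fun hφ M e he => ?_, fun h M B hB => ?_⟩
  · rw [realizedOnIncreasing_descentFormula_iff] at he
    let B : ℕ → Finset (β → M) := fun n => (Finset.range (n + 1)).image fun j => e j ∘ Sum.inr
    have hB : Antitone fun n => ⋂ b ∈ B n, instSet φ b := fun n n' h =>
      biInter_subset_biInter_left <| Finset.coe_subset.2 <|
        Finset.image_subset_image (Finset.range_mono (by omega))
    obtain ⟨N, hN⟩ := hφ M B hB
    have hmem : e (N + 1) ∘ Sum.inl ∈ ⋂ b ∈ B N, instSet φ b := by
      simp only [B, mem_iInter, Finset.mem_image, Finset.mem_range]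
      rintro _ ⟨j, hj, rfl⟩
      exact (he j (N + 1) hj).1
    rw [← hN (N + 1) N.le_succ] at hmem
    refine (he (N + 1) (N + 2) (by omega)).2 ?_
    simpa [instSet] using mem_iInter₂.1 hmem (e (N + 1) ∘ Sum.inr)
      (Finset.mem_image_of_mem (fun j => e j ∘ Sum.inr) (Finset.self_mem_range_succ (N + 1)))
  · by_contra hne
    push Not at hne
    obtain ⟨g, hg⟩ := exists_strictAnti_comp_of_antitone hB hne
    obtain ⟨e, he⟩ := exists_realizedOnIncreasing_descentFormula hg
    exact h M e he

section Escape
variable {α β : Type*} [Finite β] {M : Type w} [L.Structure M]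

noncomputable def escapeFormula (φ : L.Formula (α ⊕ β)) (n : ℕ) : L.Formula (Fin (n + 1) × α) :=
  Formula.iExs β (Formula.iInf (fun i : Fin n =>
      φ.relabel (Sum.elim (fun x => Sum.inl (i.succ, x)) Sum.inr)) ⊓
    (φ.relabel (Sum.elim (fun x => Sum.inl (0, x)) Sum.inr)).not)

theorem realize_escapeFormula (φ : L.Formula (α ⊕ β)) (n : ℕ) (w : Fin (n + 1) → α → M) :
    (escapeFormula φ n).Realize (fun p => w p.1 p.2) ↔
      ∃ c : β → M, (∀ i : Fin n, φ.Realize (Sum.elim (w i.succ) c)) ∧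
        ¬φ.Realize (Sum.elim (w 0) c) := by
  have hw : ∀ (i : Fin (n + 1)) (c : β → M), Sum.elim (fun p => w p.1 p.2) c ∘
      Sum.elim (fun x => Sum.inl (i, x)) Sum.inr = Sum.elim (w i) c := fun i c => by
    ext (x | y) <;> rfl
  simp only [escapeFormula, Formula.realize_iExs, Formula.realize_inf, Formula.realize_not,
    Formula.realize_iInf, Formula.realize_relabel, hw]

theorem exists_separating_param_of_isIndiscernible {φ : L.Formula (α ⊕ β)} {a : ℕ → α → M}
    (ha : IsIndiscernible (L := L) a) {b : β → M}
    (hb : ∀ i, 0 < i → φ.Realize (Sum.elim (a i) b)) (hb0 : ¬φ.Realize (Sum.elim (a 0) b))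
    (n j : ℕ) :
    ∃ c : β → M, (∀ i : Fin n, φ.Realize (Sum.elim (a (j + i + 1)) c)) ∧
      ¬φ.Realize (Sum.elim (a j) c) := by
  have h0 : (escapeFormula φ n).Realize fun p => a p.1 p.2 :=
    (realize_escapeFormula φ n fun i => a i).2 ⟨b, fun i => hb _ i.succ_pos, hb0⟩
  have hj := (ha (n + 1) (fun i => i) (fun i => j + i) (fun _ _ h => h)
    (fun _ _ h => Nat.add_lt_add_left h j) _).1 h0
  simpa [realize_escapeFormula φ n fun i => a (j + i), add_assoc] using hj

end Escape

theorem IsIndiscernible.comp {M : Type w} [L.Structure M] {γ δ : Type*} {f : ℕ → γ → M}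
    (hf : IsIndiscernible (L := L) f) {g : ℕ → ℕ} (hg : StrictMono g) (h : δ → γ) :
    IsIndiscernible (L := L) fun i => f (g i) ∘ h := fun n i j hi hj ψ => by
  have := hf n (g ∘ i) (g ∘ j) (hg.comp hi) (hg.comp hj) (ψ.relabel (Prod.map id h))
  rwa [Formula.realize_relabel, Formula.realize_relabel] at this

theorem pf_of_isIndiscernible {α β : Type*} {N : Theory.ModelType.{u, v, max u v} T}
    {f : ℕ → α ⊕ β → N} (hf : IsIndiscernible (L := L) f) :
    Pf T (typeOf (L := L) (Sum.elim (f 2 ∘ Sum.inl) (f 1 ∘ Sum.inr))) (typeOf (f 1)) := by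
  refine ⟨N, f 1 ∘ Sum.inr, fun i => f (i + 1) ∘ Sum.inl, hf.comp (strictMono_id.add_const 1) _,
    fun i hi => ?_, by rw [Sum.elim_comp_inl_inr]⟩
  ext ψ
  have hpair : ∀ k, 1 < k → StrictMono ![1, k] := fun k hk =>
    Fin.strictMono_iff_lt_succ.2 (by simpa using hk)
  exact (realize_crossFormula ψ fun r => f (![1, i + 1] r)).symm.trans <|
    (hf 2 _ _ (hpair _ (by omega)) (hpair 2 one_lt_two) _).trans
      (realize_crossFormula ψ fun r => f (![1, 2] r))

variable {T} in
theorem IsEquation.realize_of_isIndiscernible {α β : Type (max u v)} [Finite β]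
    {φ : L.Formula (α ⊕ β)} (hφ : IsEquation T φ) {M : Theory.ModelType.{u, v, max u v} T}
    {a : ℕ → α → M} (ha : IsIndiscernible (L := L) a) {b : β → M}
    (hb : ∀ i, 0 < i → φ.Realize (Sum.elim (a i) b)) : φ.Realize (Sum.elim (a 0) b) := by
  by_contra hb0
  obtain ⟨N, f, hf⟩ := exists_realizedOnIncreasing_of_forall_lt T (descentFormula φ) fun m => by
    choose c hc hc0 using exists_separating_param_of_isIndiscernible ha hb hb0 m
    refine ⟨M, fun k => Sum.elim (a k) (c k), fun s hs hsm => ?_⟩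
    have hs01 : s 0 < s 1 := hs Fin.zero_lt_one
    refine (realize_descentFormula φ fun r => Sum.elim (a (s r)) (c (s r))).2 ⟨?_, ?_⟩
    · have := hc (s 0) ⟨s 1 - s 0 - 1, by have := hsm 1; omega⟩
      rwa [show s 0 + (s 1 - s 0 - 1) + 1 = s 1 by omega] at this
    · simpa using hc0 (s 0)
  exact (isEquation_iff_forall_not_realizedOnIncreasing T φ).1 hφ N f hf

theorem isEquation_iff_pf_closed {α β : Type (max u v)} [Finite β] (φ : L.Formula (α ⊕ β)) :
    IsEquation T φ ↔
      ∀ p q : Set (L.Formula (α ⊕ β)), IsRealizedType T p → IsRealizedType T q →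
        Pf T p q → φ ∈ p → φ ∈ q := by
  refine ⟨fun hφ p q _ _ ⟨M, b, a, ha, hp, hq⟩ hφp => ?_, fun hcl => ?_⟩
  · rw [← hq]
    exact hφ.realize_of_isIndiscernible ha fun i hi => by rwa [← hp i hi] at hφp
  · refine (isEquation_iff_forall_not_realizedOnIncreasing T φ).2 fun M e he => ?_
    obtain ⟨N, f, hf, hfe⟩ := exists_isIndiscernible_realizedOnIncreasing T e
    have hdesc := (realizedOnIncreasing_descentFormula_iff φ f).1 (hfe 2 _ he) 1 2 one_lt_two
    exact hdesc.2 (hcl _ _ ⟨N, _, rfl⟩ ⟨N, _, rfl⟩ (pf_of_isIndiscernible T hf) hdesc.1)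

end Equationality
end

section
/- If p(x;y) ⟶ q(x;y) and p(x;y) implies that x is algebraic over y, then q = p. -/
open FirstOrder FirstOrder.Language Set

universe u v w

namespace Equationality

variable {L : FirstOrder.Language.{u, v}}

variable (T : L.Theory)

/-- An element `x` is algebraic over a tuple `b` if some formula `φ(v, b)` satisfied by `x`
has only finitely many solutions. -/
def InAlgebraicClosure {M : Type w} [L.Structure M] {β : Type*} (x : M) (b : β → M) : Prop :=
  ∃ φ : L.Formula (Unit ⊕ β), φ.Realize (Sum.elim (fun _ => x) b) ∧
    {y : M | φ.Realize (Sum.elim (fun _ => y) b)}.Finite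

/-- Helper: a two-term strictly increasing tuple is strictly monotone. -/
lemma strictMono_pair {c d : ℕ} (h : c < d) : StrictMono ![c, d] := by
  intro x y hxy
  match x, y with
  | 0, 0 => exact absurd hxy (lt_irrefl _)
  | 0, 1 => simpa using h
  | 1, 0 => exact absurd hxy (by decide)
  | 1, 1 => exact absurd hxy (lt_irrefl _)

/-- If `p(x; y) ⟶ q(x; y)` and `p(x; y)` implies that `x` is algebraic over `y`
(every realization `(a, b)` of `p` has each coordinate of `a` algebraic over `b`), then `q = p`. -/
theorem pf_algebraic {α β : Type (max u v)} [Finite α] [Finite β]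
    (hT : T.IsComplete) (p q : Set (L.Formula (α ⊕ β)))
    (hp : IsRealizedType T p)
    (halg : ∀ (M : Theory.ModelType.{u, v, max u v} T) (a : α → M) (b : β → M),
      typeOf (Sum.elim a b) = p → ∀ i : α, InAlgebraicClosure (L := L) (a i) b)
    (h : Pf T p q) : q = p := by
  classical
  obtain ⟨M, b, a, hind, hpi, hq⟩ := h
  have h1 : typeOf (L := L) (Sum.elim (a 1) b) = p := hpi 1 one_pos
  have halg1 := halg M (a 1) b h1
  choose φ hφ hfin using halg1
  -- relabeled formulas in variables `α ⊕ β`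
  set ψ : α → L.Formula (α ⊕ β) :=
    fun k => (φ k).relabel (Sum.elim (fun _ : Unit => Sum.inl k) Sum.inr) with hψ
  have hψreal : ∀ (x : α → M) (k : α),
      (ψ k).Realize (Sum.elim x b) ↔ (φ k).Realize (Sum.elim (fun _ => x k) b) := by
    intro x k
    rw [hψ]
    simp only [Formula.realize_relabel]
    constructor <;> intro hh <;> convert hh using 2 <;>
      funext z <;> rcases z with z | z <;> simp
  -- every `a i`, `i > 0`, has each coordinate in the finite solution set
  have hrel : ∀ i : ℕ, 0 < i → ∀ k : α,
      a i k ∈ {y : M | (φ k).Realize (Sum.elim (fun _ => y) b)} := by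
    intro i hi k
    have hmem : ψ k ∈ typeOf (L := L) (Sum.elim (a i) b) := by
      rw [hpi i hi, ← h1]
      exact (hψreal (a 1) k).2 (hφ k)
    exact (hψreal (a i) k).1 hmem
  -- the realizations land in a finite set
  have hSfin : (Set.pi Set.univ
      (fun k : α => {y : M | (φ k).Realize (Sum.elim (fun _ => y) b)})).Finite :=
    Set.Finite.pi fun k => hfin k
  have : Finite ↥(Set.pi Set.univ
      (fun k : α => {y : M | (φ k).Realize (Sum.elim (fun _ => y) b)})) := hSfin
  -- get a repetition in the sequence
  obtain ⟨m, n, hmn, heq⟩ := Finite.exists_ne_map_eq_of_infinite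
    (fun i : ℕ => (⟨a (i + 1), fun k _ => hrel (i + 1) (Nat.succ_pos i) k⟩ :
      ↥(Set.pi Set.univ
        (fun k : α => {y : M | (φ k).Realize (Sum.elim (fun _ => y) b)}))))
  have heq' : a (m + 1) = a (n + 1) := congrArg Subtype.val heq
  -- WLOG m < n
  rcases lt_or_gt_of_ne hmn with hlt | hlt
  case _ =>
    have key : a 0 = a 1 := by
      funext k
      have smj : StrictMono (![(0 : ℕ), 1]) := strictMono_pair one_pos
      have smi : StrictMono (![m + 1, n + 1]) := strictMono_pair (by omega)
      have := hind 2 ![m + 1, n + 1] ![0, 1] smi smj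
        (Term.equal (Term.var ((0 : Fin 2), k)) (Term.var ((1 : Fin 2), k)))
      simp only [Formula.realize_equal, Term.realize_var] at this
      have h01 := this.1 (by simp [heq'])
      simpa using h01
    rw [← hq, ← h1, key]
  case _ =>
    have heq'' : a (n + 1) = a (m + 1) := heq'.symm
    have key : a 0 = a 1 := by
      funext k
      have smj : StrictMono (![(0 : ℕ), 1]) := strictMono_pair one_pos
      have smi : StrictMono (![n + 1, m + 1]) := strictMono_pair (by omega)
      have := hind 2 ![n + 1, m + 1] ![0, 1] smi smj
        (Term.equal (Term.var ((0 : Fin 2), k)) (Term.var ((1 : Fin 2), k)))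
      simp only [Formula.realize_equal, Term.realize_var] at this
      have h01 := this.1 (by simp [heq''])
      simpa using h01
    rw [← hq, ← h1, key]


end Equationality
end

section
/- Every indiscernibly cyclic theory is stable; equivalently, every unstable complete theory admits a proper cycle of types of length 2, i.e., two distinct complete types p(x;y) ≠ q(x;y) over ∅ with p ⟶ q and q ⟶ p. -/
open FirstOrder FirstOrder.Language Set

universe u v w

namespace ExtrAux

private lemma extend_strictMono {n m : ℕ} (hnm : n ≤ m) (s : Fin n → ℕ) (hs : StrictMono s) :
    ∃ t : Fin m → ℕ, StrictMono t ∧ ∀ k : Fin n, t (Fin.castLE hnm k) = s k := by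
  classical
  set B : ℕ := n + Finset.univ.sup s with hB
  refine ⟨fun k => if h : (k : ℕ) < n then s ⟨k, h⟩ else B + k, ?_, ?_⟩
  · intro k l hkl
    have hkl' : (k : ℕ) < (l : ℕ) := hkl
    by_cases hk : (k : ℕ) < n <;> by_cases hl : (l : ℕ) < n
    · simp only [dif_pos hk, dif_pos hl]
      exact hs (by exact hkl')
    · simp only [dif_pos hk, dif_neg hl]
      have h1 : s ⟨k, hk⟩ ≤ Finset.univ.sup s := Finset.le_sup (Finset.mem_univ _)
      omega
    · omega
    · simp only [dif_neg hk, dif_neg hl]; omega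
  · intro k
    have : ((Fin.castLE hnm k : Fin m) : ℕ) = (k : ℕ) := rfl
    simp only [this, dif_pos k.isLt]

private lemma ramsey {γ : Type*} [Finite γ] :
    ∀ (n : ℕ) (c : (Fin n → ℕ) → γ),
      ∃ f : ℕ → ℕ, StrictMono f ∧ ∃ d, ∀ t : Fin n → ℕ, StrictMono t → c (f ∘ t) = d := by
  intro n
  induction n with
  | zero =>
    intro c
    refine ⟨id, strictMono_id, c (fun i => i.elim0), fun t _ => ?_⟩
    congr 1
    funext i; exact i.elim0
  | succ n IH =>
    intro c
    have key : ∀ f : ℕ → ℕ, StrictMono f → ∃ (g : ℕ → ℕ) (d : γ), StrictMono g ∧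
        ∀ t : Fin n → ℕ, StrictMono t →
          c (Fin.cons (f 0) (fun i => f (g (t i) + 1))) = d := by
      intro f _
      obtain ⟨g, hg, d, hd⟩ := IH (fun t => c (Fin.cons (f 0) (fun i => f (t i + 1))))
      exact ⟨g, d, hg, fun t ht => hd t ht⟩
    choose g dd hg hmono using key
    let step : {f : ℕ → ℕ // StrictMono f} → {f : ℕ → ℕ // StrictMono f} :=
      fun f => ⟨fun m => f.1 (g f.1 f.2 m + 1),
        fun a b hab => f.2 (by have := (hg f.1 f.2) hab; omega)⟩
    let h : ℕ → {f : ℕ → ℕ // StrictMono f} := fun k => step^[k] ⟨id, strictMono_id⟩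
    have hsucc : ∀ k, h (k + 1) = step (h k) := fun k => Function.iterate_succ_apply' _ _ _
    let x : ℕ → ℕ := fun k => (h k).1 0
    let D : ℕ → γ := fun k => dd (h k).1 (h k).2
    have hsucc1 : ∀ k m, (h (k + 1)).1 m = (h k).1 (g (h k).1 (h k).2 m + 1) := by
      intro k m; rw [hsucc]
    have sub : ∀ k l, k ≤ l → ∃ u : ℕ → ℕ, StrictMono u ∧ (h l).1 = (h k).1 ∘ u := by
      intro k l hkl
      induction l, hkl using Nat.le_induction with
      | base => exact ⟨id, strictMono_id, rfl⟩
      | succ l hkl ih =>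
        obtain ⟨u, hu, hul⟩ := ih
        refine ⟨u ∘ (fun m => g (h l).1 (h l).2 m + 1),
          hu.comp (fun a b hab => by have := (hg (h l).1 (h l).2) hab; omega), ?_⟩
        funext m
        simp only [hsucc1, Function.comp_apply, hul]
    have xmono : StrictMono x := by
      intro k l hkl
      obtain ⟨u, hu, hul⟩ := sub (k + 1) l hkl
      have : x l = (h (k + 1)).1 (u 0) := by simp [x, hul]
      rw [this, hsucc1]
      exact (h k).2 (by omega)
    have main : ∀ (k : ℕ) (s : Fin n → ℕ), StrictMono s → (∀ i, k < s i) →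
        c (Fin.cons (x k) (fun i => x (s i))) = D k := by
      intro k s hs hks
      have hx : ∀ i : Fin n, ∃ m : ℕ, x (s i) = (h (k + 1)).1 m := by
        intro i
        obtain ⟨u, hu, hul⟩ := sub (k + 1) (s i) (hks i)
        exact ⟨u 0, by simp [x, hul]⟩
      choose m hm using hx
      have hmmono : StrictMono m := by
        intro a b hab
        have : (h (k+1)).1 (m a) < (h (k+1)).1 (m b) := by
          rw [← hm, ← hm]; exact xmono (hs hab)
        exact (h (k+1)).2.lt_iff_lt.1 this
      have hD : D k = dd (h k).1 (h k).2 := rfl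
      have := hmono (h k).1 (h k).2 m hmmono
      rw [hD, ← this]
      congr 1
      funext i
      refine Fin.cases rfl (fun i => ?_) i
      simp only [Fin.cons_succ]
      rw [hm i, hsucc1]
    -- pigeonhole
    obtain ⟨d, hd⟩ := Finite.exists_infinite_fiber D
    have hinf : (setOf fun k => D k = d).Infinite := by
      rw [← Set.infinite_coe_iff]
      exact hd
    let e : ℕ → ℕ := Nat.nth (fun k => D k = d)
    have he : StrictMono e := Nat.nth_strictMono hinf
    have hed : ∀ k, D (e k) = d := fun k => Nat.nth_mem_of_infinite hinf k
    refine ⟨x ∘ e, xmono.comp he, d, fun t ht => ?_⟩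
    have hdecomp : (x ∘ e) ∘ t = Fin.cons (x (e (t 0))) (fun i => x (e (t i.succ))) := by
      funext j
      refine Fin.cases rfl (fun j => ?_) j
      simp [Fin.cons_succ]
    rw [hdecomp, main (e (t 0)) (fun i => e (t i.succ))
      (he.comp (fun a b hab => ht (Fin.succ_lt_succ_iff.2 hab)))
      (fun i => he (ht (Fin.succ_pos i)))]
    exact hed _


variable {L : FirstOrder.Language.{u, v}}

section Sent
variable {γ : Type*}

/-- Sentence with constants: instance of `ψ` at the index tuple `i`. -/
noncomputable def instSent {n : ℕ} (ψ : L.Formula (Fin n × γ)) (i : Fin n → ℤ) :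
    (L[[ℤ × γ]]).Sentence :=
  ((L.lhomWithConstants (ℤ × γ)).onFormula ψ).subst fun p => (L.con (i p.1, p.2)).term

lemma realize_instSent {M : Type*} [L.Structure M] [(L[[ℤ × γ]]).Structure M]
    [(L.lhomWithConstants (ℤ × γ)).IsExpansionOn M]
    {n : ℕ} (ψ : L.Formula (Fin n × γ)) (i : Fin n → ℤ) :
    (instSent ψ i).Realize M ↔ ψ.Realize (fun p => ((L.con ((i p.1, p.2)) : M))) := by
  rw [instSent, Sentence.Realize, Formula.Realize, BoundedFormula.realize_subst]
  rw [show (fun p => Term.realize (M := M) default ((L.con ((i p.1, p.2))).term)) =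
    (fun p : Fin n × γ => ((L.con ((i p.1, p.2)) : M))) from funext fun p => Term.realize_constants]
  exact LHom.realize_onFormula _ _

end Sent

section Phi
variable {α β : Type*}

noncomputable def phiSent (φ : L.Formula (α ⊕ β)) (i j : ℤ) : (L[[ℤ × (α ⊕ β)]]).Sentence :=
  ((L.lhomWithConstants (ℤ × (α ⊕ β))).onFormula φ).subst
    (Sum.elim (fun x => (L.con ((i, Sum.inl x) : ℤ × (α ⊕ β))).term)
      (fun y => (L.con ((j, Sum.inr y) : ℤ × (α ⊕ β))).term))

lemma realize_phiSent {M : Type*} [L.Structure M] [(L[[ℤ × (α ⊕ β)]]).Structure M]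
    [(L.lhomWithConstants (ℤ × (α ⊕ β))).IsExpansionOn M]
    (φ : L.Formula (α ⊕ β)) (i j : ℤ) :
    (phiSent φ i j).Realize M ↔
      φ.Realize (Sum.elim (fun x => ((L.con ((i, Sum.inl x) : ℤ × (α ⊕ β))) : M))
        (fun y => ((L.con ((j, Sum.inr y) : ℤ × (α ⊕ β))) : M))) := by
  have heq : (fun p : α ⊕ β => Term.realize (M := M) (default : Empty → M)
        (Sum.elim (fun x => (L.con ((i, Sum.inl x) : ℤ × (α ⊕ β))).term)
          (fun y => (L.con ((j, Sum.inr y) : ℤ × (α ⊕ β))).term) p)) =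
      (Sum.elim (fun x => ((L.con ((i, Sum.inl x) : ℤ × (α ⊕ β))) : M))
        (fun y => ((L.con ((j, Sum.inr y) : ℤ × (α ⊕ β))) : M))) := by
    funext p
    cases p <;> simp
  rw [phiSent, Sentence.Realize, Formula.Realize, BoundedFormula.realize_subst, heq]
  exact LHom.realize_onFormula _ _

/-- A fragment of the theory asserting indiscernibility and the order pattern. -/
def Frag (T : L.Theory) (φ : L.Formula (α ⊕ β)) (k : ℕ)
    (Ψ : Finset (Σ n : ℕ, L.Formula (Fin n × (α ⊕ β)))) : (L[[ℤ × (α ⊕ β)]]).Theory :=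
  (L.lhomWithConstants (ℤ × (α ⊕ β))).onTheory T ∪
    {s | ∃ (n : ℕ) (ψ : L.Formula (Fin n × (α ⊕ β))) (i j : Fin n → ℤ),
      (⟨n, ψ⟩ : Σ n : ℕ, L.Formula (Fin n × (α ⊕ β))) ∈ Ψ ∧
      (∀ m, -(k : ℤ) ≤ i m) ∧ (∀ m, -(k : ℤ) ≤ j m) ∧
      StrictMono i ∧ StrictMono j ∧ s = (instSent ψ i).iff (instSent ψ j)} ∪
    {s | ∃ i j : ℤ, (i < j ∧ -(k : ℤ) < j ∧ s = phiSent φ i j) ∨ (j ≤ i ∧ s = (phiSent φ i j).not)}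

end Phi

section Frag2

variable {α β : Type (max u v)}

lemma frag_mono {T : L.Theory} {φ : L.Formula (α ⊕ β)} {k k' : ℕ}
    {Ψ Ψ' : Finset (Σ n : ℕ, L.Formula (Fin n × (α ⊕ β)))}
    (hk : k ≤ k') (hΨ : Ψ ⊆ Ψ') : Frag T φ k Ψ ⊆ Frag T φ k' Ψ' := by
  intro s hs
  rcases hs with (hs | ⟨n, ψ, i, j, hmem, hib, hjb, hi, hj, rfl⟩) | ⟨i, j, hs⟩
  · exact Or.inl (Or.inl hs)
  · exact Or.inl (Or.inr ⟨n, ψ, i, j, hΨ hmem,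
      fun m => le_trans (by omega) (hib m), fun m => le_trans (by omega) (hjb m), hi, hj, rfl⟩)
  · refine Or.inr ⟨i, j, ?_⟩
    rcases hs with ⟨h1, h2, rfl⟩ | ⟨h1, rfl⟩
    · exact Or.inl ⟨h1, lt_of_le_of_lt (by omega) h2, rfl⟩
    · exact Or.inr ⟨h1, rfl⟩

lemma frag_isSatisfiable {T : L.Theory} {φ : L.Formula (α ⊕ β)}
    (M : Theory.ModelType.{u, v, max u v} T)
    (a : ℕ → α → M) (b : ℕ → β → M)
    (hM : ∀ i j : ℕ, φ.Realize (Sum.elim (a i) (b j)) ↔ i < j)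
    (k : ℕ) (Ψ : Finset (Σ n : ℕ, L.Formula (Fin n × (α ⊕ β)))) :
    (Frag T φ k Ψ).IsSatisfiable := by
  classical
  set cM : ℕ → (α ⊕ β) → M := fun m => Sum.elim (a m) (b m) with hcM
  set n' : ℕ := Ψ.sup Sigma.fst with hn'
  set Ψpad : Finset (L.Formula (Fin n' × (α ⊕ β))) :=
    Ψ.attach.image (fun d => d.1.2.relabel
      (fun p => (Fin.castLE (Finset.le_sup (f := Sigma.fst) d.2) p.1, p.2))) with hΨpad
  obtain ⟨r, hr, dcol, hcol⟩ := ramsey (γ := {x // x ∈ Ψpad} → Bool) n'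
    (fun t ψ' => decide ((ψ'.1).Realize (fun p => cM (t p.1) p.2)))
  letI : (constantsOn (ℤ × (α ⊕ β))).Structure M :=
    constantsOn.structure (fun p => cM (r ((p.1 + k).toNat)) p.2)
  haveI : M ⊨ Frag T φ k Ψ := by
    rw [Theory.model_iff]
    intro s hs
    rcases hs with (hs | ⟨n, ψ, i, j, hmem, hib, hjb, hi, hj, rfl⟩) | ⟨i, j, hs⟩
    · obtain ⟨ψ₀, hψ₀, rfl⟩ := LHom.mem_onTheory.1 hs
      rw [LHom.realize_onSentence]
      exact Theory.realize_sentence_of_mem T hψ₀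
    · have hn : n ≤ n' := Finset.le_sup (f := Sigma.fst) hmem
      have hgi : StrictMono (fun m : Fin n => ((i m + k).toNat)) := by
        intro x y hxy
        have h1 := hi hxy
        have h2 := hib x
        simp only
        omega
      have hgj : StrictMono (fun m : Fin n => ((j m + k).toNat)) := by
        intro x y hxy
        have h1 := hj hxy
        have h2 := hjb x
        simp only
        omega
      obtain ⟨t, ht, htc⟩ := extend_strictMono hn _ hgi
      obtain ⟨t', ht', htc'⟩ := extend_strictMono hn _ hgj
      have hpadmem : (ψ.relabel (fun p : Fin n × (α ⊕ β) => (Fin.castLE hn p.1, p.2))) ∈ Ψpad :=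
        Finset.mem_image.2 ⟨⟨⟨n, ψ⟩, hmem⟩, Finset.mem_attach _ _, rfl⟩
      have e1 := congrFun (hcol t ht) ⟨_, hpadmem⟩
      have e2 := congrFun (hcol t' ht') ⟨_, hpadmem⟩
      have e3 := decide_eq_decide.1 (e1.trans e2.symm)
      rw [show ((M : Type (max u v)) ⊨ (instSent ψ i).iff (instSent ψ j)) ↔
          ((M : Type (max u v)) ⊨ instSent ψ i ↔ (M : Type (max u v)) ⊨ instSent ψ j)
          from Formula.realize_iff, realize_instSent, realize_instSent]
      have heval : ∀ (ii : Fin n → ℤ) (u : Fin n' → ℕ),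
          (∀ m : Fin n, u (Fin.castLE hn m) = (ii m + k).toNat) →
          ((ψ.relabel (fun p : Fin n × (α ⊕ β) => (Fin.castLE hn p.1, p.2))).Realize
            (fun p => cM ((r ∘ u) p.1) p.2) ↔
            ψ.Realize (fun p => ((L.con ((ii p.1, p.2) : ℤ × (α ⊕ β)) : M)))) := by
        intro ii u hu
        rw [Formula.realize_relabel]
        have hfun : ((fun p : Fin n' × (α ⊕ β) => cM ((r ∘ u) p.1) p.2) ∘
            (fun p : Fin n × (α ⊕ β) => (Fin.castLE hn p.1, p.2)))
            = fun p : Fin n × (α ⊕ β) => ((L.con ((ii p.1, p.2) : ℤ × (α ⊕ β)) : M)) := by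
          funext p
          show cM (r (u (Fin.castLE hn p.1))) p.2 = _
          rw [hu p.1]
          rfl
        rw [hfun]
      exact (heval i t htc).symm.trans (e3.trans (heval j t' htc'))
    · rcases hs with ⟨hij, hjk, rfl⟩ | ⟨hij, rfl⟩
      · rw [realize_phiSent]
        have hfun : (Sum.elim (fun x => ((L.con ((i, Sum.inl x) : ℤ × (α ⊕ β))) : M))
            (fun y => ((L.con ((j, Sum.inr y) : ℤ × (α ⊕ β))) : M)))
            = Sum.elim (a (r ((i + k).toNat))) (b (r ((j + k).toNat))) := by
          funext p
          cases p <;> rfl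
        rw [hfun, hM]
        exact hr (by omega)
      · rw [Sentence.realize_not, realize_phiSent]
        have hfun : (Sum.elim (fun x => ((L.con ((i, Sum.inl x) : ℤ × (α ⊕ β))) : M))
            (fun y => ((L.con ((j, Sum.inr y) : ℤ × (α ⊕ β))) : M)))
            = Sum.elim (a (r ((i + k).toNat))) (b (r ((j + k).toNat))) := by
          funext p
          cases p <;> rfl
        rw [hfun, hM]
        intro hcon
        have := hr.lt_iff_lt.1 hcon
        omega
  exact Theory.Model.isSatisfiable M


lemma extraction {T : L.Theory} (φ : L.Formula (α ⊕ β))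
    (M : Theory.ModelType.{u, v, max u v} T)
    (a : ℕ → α → M) (b : ℕ → β → M)
    (hM : ∀ i j : ℕ, φ.Realize (Sum.elim (a i) (b j)) ↔ i < j) :
    ∃ (N : Theory.ModelType.{u, v, max u v} T) (c : ℤ → (α ⊕ β) → N),
      (∀ (n : ℕ) (i j : Fin n → ℤ), StrictMono i → StrictMono j →
        ∀ ψ : L.Formula (Fin n × (α ⊕ β)),
          ψ.Realize (fun p => c (i p.1) p.2) ↔ ψ.Realize (fun p => c (j p.1) p.2)) ∧
      φ.Realize (Sum.elim (fun x => c 0 (Sum.inl x)) (fun y => c 1 (Sum.inr y))) ∧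
      ¬ φ.Realize (Sum.elim (fun x => c 1 (Sum.inl x)) (fun y => c 0 (Sum.inr y))) := by
  classical
  have hdir : Directed (· ⊆ ·) (fun p : ℕ × Finset (Σ n : ℕ, L.Formula (Fin n × (α ⊕ β))) =>
      Frag T φ p.1 p.2) := by
    intro p q
    exact ⟨(max p.1 q.1, p.2 ∪ q.2),
      frag_mono (le_max_left _ _) Finset.subset_union_left,
      frag_mono (le_max_right _ _) Finset.subset_union_right⟩
  have hsat : Theory.IsSatisfiable
      (⋃ p : ℕ × Finset (Σ n : ℕ, L.Formula (Fin n × (α ⊕ β))), Frag T φ p.1 p.2) :=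
    (Theory.isSatisfiable_directed_union_iff hdir).2
      (fun p => frag_isSatisfiable M a b hM p.1 p.2)
  obtain ⟨N'⟩ := hsat
  letI : (L[[ℤ × (α ⊕ β)]]).Structure N' := N'.struc
  letI instL : L.Structure N' := (L.lhomWithConstants (ℤ × (α ⊕ β))).reduct N'
  haveI hexp : (L.lhomWithConstants (ℤ × (α ⊕ β))).IsExpansionOn N' :=
    LHom.isExpansionOn_reduct _ _
  have hsub : (L.lhomWithConstants (ℤ × (α ⊕ β))).onTheory T ⊆
      ⋃ p : ℕ × Finset (Σ n : ℕ, L.Formula (Fin n × (α ⊕ β))), Frag T φ p.1 p.2 := by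
    intro s hs
    exact Set.mem_iUnion.2 ⟨(0, ∅), Or.inl (Or.inl hs)⟩
  haveI hmodT' : (N' : Type (max u v)) ⊨ (L.lhomWithConstants (ℤ × (α ⊕ β))).onTheory T :=
    N'.is_model.mono hsub
  haveI hmodT : (N' : Type (max u v)) ⊨ T := (LHom.onTheory_model _ _).1 hmodT'
  refine ⟨⟨N'⟩, fun z s => ((L.con ((z, s) : ℤ × (α ⊕ β))) : N'), ?_, ?_, ?_⟩
  · intro n i j hi hj ψ
    set k₀ : ℕ := Finset.univ.sup (fun m : Fin n => (i m).natAbs ⊔ (j m).natAbs) with hk₀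
    have hib : ∀ m : Fin n, -(k₀ : ℤ) ≤ i m := by
      intro m
      have := Finset.le_sup (f := fun m : Fin n => (i m).natAbs ⊔ (j m).natAbs)
        (Finset.mem_univ m)
      simp only [le_sup_iff, sup_le_iff] at this
      omega
    have hjb : ∀ m : Fin n, -(k₀ : ℤ) ≤ j m := by
      intro m
      have := Finset.le_sup (f := fun m : Fin n => (i m).natAbs ⊔ (j m).natAbs)
        (Finset.mem_univ m)
      simp only [le_sup_iff, sup_le_iff] at this
      omega
    have hmem : (instSent ψ i).iff (instSent ψ j) ∈
        ⋃ p : ℕ × Finset (Σ n : ℕ, L.Formula (Fin n × (α ⊕ β))), Frag T φ p.1 p.2 :=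
      Set.mem_iUnion.2 ⟨(k₀, {⟨n, ψ⟩}),
        Or.inl (Or.inr ⟨n, ψ, i, j, Finset.mem_singleton_self _, hib, hjb, hi, hj, rfl⟩)⟩
    have := Theory.realize_sentence_of_mem (M := (N' : Type (max u v))) _ hmem
    rw [show ((N' : Type (max u v)) ⊨ (instSent ψ i).iff (instSent ψ j)) ↔
        ((N' : Type (max u v)) ⊨ instSent ψ i ↔ (N' : Type (max u v)) ⊨ instSent ψ j)
        from Formula.realize_iff, realize_instSent, realize_instSent] at this
    exact this
  · have hmem : phiSent φ 0 1 ∈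
        ⋃ p : ℕ × Finset (Σ n : ℕ, L.Formula (Fin n × (α ⊕ β))), Frag T φ p.1 p.2 :=
      Set.mem_iUnion.2 ⟨(0, ∅), Or.inr ⟨0, 1, Or.inl ⟨by norm_num, by norm_num, rfl⟩⟩⟩
    have := Theory.realize_sentence_of_mem (M := (N' : Type (max u v))) _ hmem
    rw [realize_phiSent] at this
    exact this
  · have hmem : (phiSent φ 1 0).not ∈
        ⋃ p : ℕ × Finset (Σ n : ℕ, L.Formula (Fin n × (α ⊕ β))), Frag T φ p.1 p.2 :=
      Set.mem_iUnion.2 ⟨(0, ∅), Or.inr ⟨1, 0, Or.inr ⟨by norm_num, rfl⟩⟩⟩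
    have := Theory.realize_sentence_of_mem (M := (N' : Type (max u v))) _ hmem
    rw [Sentence.realize_not, realize_phiSent] at this
    exact this

end Frag2

end ExtrAux

namespace Equationality

variable {L : FirstOrder.Language.{u, v}}

variable (T : L.Theory)

/-- Every indiscernibly acyclic theory is stable; equivalently, every unstable
complete theory admits a proper cycle of types of length `2`: if some formula `φ(x; y)` has the
order property in a model of `T`, then there are two distinct complete types `p ≠ q` over `∅`
with `p ⟶ q` and `q ⟶ p`. -/
theorem unstable_has_proper_two_cycle {α β : Type (max u v)} [Finite α] [Finite β]
    (hT : T.IsComplete) (φ : L.Formula (α ⊕ β))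
    (h : ∃ (M : Theory.ModelType.{u, v, max u v} T) (a : ℕ → α → M) (b : ℕ → β → M),
      ∀ i j : ℕ, φ.Realize (Sum.elim (a i) (b j)) ↔ i < j) :
    ∃ p q : Set (L.Formula ((α ⊕ β) ⊕ (α ⊕ β))),
      IsRealizedType T p ∧ IsRealizedType T q ∧ p ≠ q ∧ Pf T p q ∧ Pf T q p := by

  clear hT
  obtain ⟨M, a, b, hM⟩ := h
  obtain ⟨N, c, master, hpos, hneg⟩ := ExtrAux.extraction φ M a b hM
  have strict2 : ∀ (i j : ℤ), i < j → StrictMono ![i, j] := by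
    intro i j hij x y hxy
    fin_cases x <;> fin_cases y <;> simp_all <;> omega
  have incPair : ∀ i j i' j' : ℤ, i < j → i' < j' →
      typeOf (L := L) (Sum.elim (c i) (c j)) = typeOf (Sum.elim (c i') (c j')) := by
    intro i j i' j' hij hij'
    ext θ
    show θ.Realize _ ↔ θ.Realize _
    have key : ∀ u w : ℤ,
        ((θ.relabel (Sum.elim (fun s : α ⊕ β => ((0 : Fin 2), s))
            (fun s : α ⊕ β => ((1 : Fin 2), s)))).Realize
          (fun p => c (![u, w] p.1) p.2) ↔ θ.Realize (Sum.elim (c u) (c w))) := by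
      intro u w
      rw [Formula.realize_relabel]
      have : ((fun p : Fin 2 × (α ⊕ β) => c (![u, w] p.1) p.2) ∘
          (Sum.elim (fun s : α ⊕ β => ((0 : Fin 2), s)) (fun s : α ⊕ β => ((1 : Fin 2), s))))
          = Sum.elim (c u) (c w) := by
        funext p
        cases p <;> rfl
      rw [this]
    rw [← key i j, ← key i' j']
    exact master 2 ![i, j] ![i', j'] (strict2 _ _ hij) (strict2 _ _ hij') _
  have decPair : ∀ i j i' j' : ℤ, j < i → j' < i' →
      typeOf (L := L) (Sum.elim (c i) (c j)) = typeOf (Sum.elim (c i') (c j')) := by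
    intro i j i' j' hij hij'
    ext θ
    show θ.Realize _ ↔ θ.Realize _
    have key : ∀ u w : ℤ,
        ((θ.relabel (Sum.elim (fun s : α ⊕ β => ((1 : Fin 2), s))
            (fun s : α ⊕ β => ((0 : Fin 2), s)))).Realize
          (fun p => c (![w, u] p.1) p.2) ↔ θ.Realize (Sum.elim (c u) (c w))) := by
      intro u w
      rw [Formula.realize_relabel]
      have : ((fun p : Fin 2 × (α ⊕ β) => c (![w, u] p.1) p.2) ∘
          (Sum.elim (fun s : α ⊕ β => ((1 : Fin 2), s)) (fun s : α ⊕ β => ((0 : Fin 2), s))))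
          = Sum.elim (c u) (c w) := by
        funext p
        cases p <;> rfl
      rw [this]
    rw [← key i j, ← key i' j']
    exact master 2 ![j, i] ![j', i'] (strict2 _ _ hij) (strict2 _ _ hij') _
  have indMono : ∀ k : ℕ → ℤ, StrictMono k →
      IsIndiscernible (L := L) (fun m => c (k m)) := by
    intro k hk n i j hi hj ψ
    exact master n (k ∘ i) (k ∘ j) (hk.comp hi) (hk.comp hj) ψ
  have indAnti : ∀ k : ℕ → ℤ, StrictAnti k →
      IsIndiscernible (L := L) (fun m => c (k m)) := by
    intro k hk n i j hi hj ψ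
    have rev : ∀ (u : Fin n → ℤ),
        ((ψ.relabel (fun p : Fin n × (α ⊕ β) => (p.1.rev, p.2))).Realize
          (fun p => c (u p.1.rev) p.2) ↔ ψ.Realize (fun p => c (u p.1) p.2)) := by
      intro u
      rw [Formula.realize_relabel]
      have : ((fun p : Fin n × (α ⊕ β) => c (u p.1.rev) p.2) ∘
          (fun p : Fin n × (α ⊕ β) => (p.1.rev, p.2))) = fun p => c (u p.1) p.2 := by
        funext p
        show c (u p.1.rev.rev) p.2 = c (u p.1) p.2
        rw [Fin.rev_rev]
      rw [this]
    rw [show (fun p : Fin n × (α ⊕ β) => (fun m => c (k m)) (i p.1) p.2)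
      = fun p : Fin n × (α ⊕ β) => c ((fun m => k (i m)) p.1) p.2 from rfl]
    rw [show (fun p : Fin n × (α ⊕ β) => (fun m => c (k m)) (j p.1) p.2)
      = fun p : Fin n × (α ⊕ β) => c ((fun m => k (j m)) p.1) p.2 from rfl]
    rw [← rev (fun m => k (i m)), ← rev (fun m => k (j m))]
    exact master n (fun m => k (i m.rev)) (fun m => k (j m.rev))
      (fun x y hxy => hk (hi (Fin.rev_lt_rev.2 hxy)))
      (fun x y hxy => hk (hj (Fin.rev_lt_rev.2 hxy))) _
  refine ⟨typeOf (Sum.elim (c 0) (c 1)), typeOf (Sum.elim (c 1) (c 0)),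
    ⟨N, _, rfl⟩, ⟨N, _, rfl⟩, ?_, ?_, ?_⟩
  · -- p ≠ q
    intro heq
    have hrel : ∀ u w : ℤ,
        ((φ.relabel (Sum.elim (fun x : α => Sum.inl (Sum.inl x))
            (fun y : β => Sum.inr (Sum.inr y)))).Realize (Sum.elim (c u) (c w)) ↔
          φ.Realize (Sum.elim (fun x => c u (Sum.inl x)) (fun y => c w (Sum.inr y)))) := by
      intro u w
      rw [Formula.realize_relabel]
      have : (Sum.elim (c u) (c w) ∘ (Sum.elim (fun x : α => Sum.inl (Sum.inl x))
          (fun y : β => Sum.inr (Sum.inr y))))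
          = Sum.elim (fun x => c u (Sum.inl x)) (fun y => c w (Sum.inr y)) := by
        funext p
        cases p <;> rfl
      rw [this]
    have hmem : (φ.relabel (Sum.elim (fun x : α => Sum.inl (Sum.inl x))
        (fun y : β => Sum.inr (Sum.inr y)))) ∈ typeOf (L := L) (Sum.elim (c 0) (c 1)) :=
      (hrel 0 1).2 hpos
    rw [heq] at hmem
    exact hneg ((hrel 1 0).1 hmem)
  · -- Pf T p q
    refine ⟨N, c 0, fun m => c (if m = 0 then 1 else -(m : ℤ)), indAnti _ ?_, ?_, ?_⟩
    · intro x y hxy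
      simp only
      split_ifs <;> omega
    · intro m hm
      show typeOf (Sum.elim (c (if m = 0 then 1 else -(m : ℤ))) (c 0)) = _
      rw [if_neg hm.ne']
      exact incPair _ _ _ _ (by omega) (by norm_num)
    · show typeOf (Sum.elim (c (if 0 = 0 then 1 else -((0 : ℕ) : ℤ))) (c 0)) = _
      rw [if_pos rfl]
  · -- Pf T q p
    refine ⟨N, c 0, fun m => c (if m = 0 then -1 else (m : ℤ)), indMono _ ?_, ?_, ?_⟩
    · intro x y hxy
      simp only
      split_ifs <;> omega
    · intro m hm
      show typeOf (Sum.elim (c (if m = 0 then -1 else (m : ℤ))) (c 0)) = _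
      rw [if_neg hm.ne']
      exact decPair _ _ _ _ (by exact_mod_cast hm) (by norm_num)
    · show typeOf (Sum.elim (c (if 0 = 0 then -1 else ((0 : ℕ) : ℤ))) (c 0)) = _
      rw [if_pos rfl]
      exact incPair _ _ _ _ (by norm_num) (by norm_num)


end Equationality
end

section
/- If a complete theory T satisfies the MS-criterion, then there exist distinct complete types p(x;y) ≠ q(x;y) over ∅ with p ⟶ q and q ⟶ p; in particular, T is not equational. -/
open FirstOrder FirstOrder.Language Set

universe u v w

namespace Equationality

variable {L : FirstOrder.Language.{u, v}}

variable (T : L.Theory)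

/-- Boolean combinations of equations for `T`. -/
inductive IsBoolCombOfEquations {α β : Type*} :
    L.Formula (α ⊕ β) → Prop
  | of_equation (φ : L.Formula (α ⊕ β)) : IsEquation T φ → IsBoolCombOfEquations φ
  | not (φ : L.Formula (α ⊕ β)) : IsBoolCombOfEquations φ → IsBoolCombOfEquations φ.not
  | inf (φ ψ : L.Formula (α ⊕ β)) :
      IsBoolCombOfEquations φ → IsBoolCombOfEquations ψ → IsBoolCombOfEquations (φ ⊓ ψ)
  | sup (φ ψ : L.Formula (α ⊕ β)) :
      IsBoolCombOfEquations φ → IsBoolCombOfEquations ψ → IsBoolCombOfEquations (φ ⊔ ψ)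

/-- `T` is equational if every formula `ψ(x; y)` (in finite tuples of variables) is equivalent
modulo `T` to a Boolean combination of equations `φ(x; y)`. -/
def IsEquational : Prop :=
  ∀ (n m : ℕ) (ψ : L.Formula (Fin n ⊕ Fin m)),
    ∃ χ : L.Formula (Fin n ⊕ Fin m), IsBoolCombOfEquations T χ ∧ T.Iff ψ χ

/-!
Ramsey's theorem and compactness turn the MS-matrix into a matrix `(a_{ij}, b_{ij})_{i,j ∈ ℤ}`
that is indiscernible: the type of a finite submatrix depends only on the order type of its row
and column indices. Put `p = tp(a₀₁, b₀₁)` and `q = tp(a₀₂, b₀₁)`; they differ at `φ`. Over `b₀₁`,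
the row `a₀₁, a₀₂, a₀₃, …` witnesses `q ⟶ p`, and `a₀₂, a_{-3,-1}, a_{-6,-4}, …` witnesses
`p ⟶ q`, since `(a_{ij}, b₀₁) ≡ (a_{ij}, b_{ij})` for `i < j < 0`.

If `p ⟶ q` with `φ ∈ p` and `φ ∉ q`, indiscernibility and compactness give `a_j`, `b_n` with
`φ(a_j, b_n)` for `n < j` but `¬ φ(a_n, b_n)`, so the intersections `φ(x, b₀) ∧ ⋯ ∧ φ(x, b_n)`
descend strictly and `φ` is not an equation. Hence Boolean combinations of equations cannot
separate `p` from `q`, whereas in an equational theory they separate any two types.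
-/

open Filter

section Ramsey

variable {C : Type*} {k : ℕ}

def IsHomogeneous (c : (Fin k → ℕ) → C) (g : ℕ → ℕ) : Prop :=
  ∀ s t : Fin k → ℕ, StrictMono s → StrictMono t → c (g ∘ s) = c (g ∘ t)

theorem exists_strictMono_endHomogeneous {c : (Fin (k + 1) → ℕ) → C}
    (ramsey : ∀ c' : (Fin k → ℕ) → C, ∃ g : ℕ → ℕ, StrictMono g ∧ IsHomogeneous c' g) :
    ∃ x : ℕ → ℕ, StrictMono x ∧ ∀ (m : ℕ) (s t : Fin k → ℕ), StrictMono s → StrictMono t →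
      (∀ i, m < s i) → (∀ i, m < t i) →
        c (Fin.cons (x m) (x ∘ s)) = c (Fin.cons (x m) (x ∘ t)) := by
  -- thinning the tail of `f` makes the colour of `f 0` followed by a tail independent of the tail
  have thin : ∀ f : ℕ → ℕ, ∃ d : ℕ → ℕ, StrictMono d ∧ 0 < d 0 ∧
      IsHomogeneous (fun v => c (Fin.cons (f 0) (f ∘ v))) d := by
    intro f
    obtain ⟨h, hh, hom⟩ := ramsey fun v => c (Fin.cons (f 0) (f ∘ Nat.succ ∘ v))
    exact ⟨Nat.succ ∘ h, StrictMono.comp (fun _ _ => Nat.succ_lt_succ) hh, Nat.succ_pos _, hom⟩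
  choose d hd hd0 hdhom using thin
  let F : ℕ → ℕ → ℕ := fun m => Nat.rec id (fun _ f => f ∘ d f) m
  have hF : ∀ m, StrictMono (F m) := fun m => by
    induction m with
    | zero => exact strictMono_id
    | succ m ih => exact ih.comp (hd _)
  have hF_nested : ∀ m m', m < m' → ∃ D : ℕ → ℕ, F m' = F (m + 1) ∘ D := by
    intro m m' hm
    induction m', hm using Nat.le_induction with
    | base => exact ⟨id, rfl⟩
    | succ m' _ ih =>
      obtain ⟨D, hD⟩ := ih
      exact ⟨D ∘ d (F m'), by rw [← Function.comp_assoc, ← hD]⟩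
  let x : ℕ → ℕ := fun m => F m 0
  have hx : StrictMono x := strictMono_nat_of_lt_succ fun m => hF m (hd0 (F m))
  refine ⟨x, hx, fun m s t hs ht hms hmt => ?_⟩
  suffices h : ∀ s : Fin k → ℕ, StrictMono s → (∀ i, m < s i) →
      c (Fin.cons (x m) (x ∘ s)) = c (Fin.cons (x m) (F (m + 1) ∘ Fin.val)) from
    (h s hs hms).trans (h t ht hmt).symm
  intro s hs hms
  have htail : ∀ i, ∃ n, x (s i) = F (m + 1) n := fun i => by
    obtain ⟨D, hD⟩ := hF_nested m (s i) (hms i)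
    exact ⟨D 0, by simp only [x, hD, Function.comp_apply]⟩
  choose u hu using htail
  have hu_mono : StrictMono u := fun i j hij => by
    have := hx (hs hij)
    rwa [hu, hu, (hF (m + 1)).lt_iff_lt] at this
  rw [show x ∘ s = F (m + 1) ∘ u from funext hu]
  exact hdhom (F m) u Fin.val hu_mono Fin.val_strictMono

/-- Infinite Ramsey theorem. -/
theorem exists_strictMono_isHomogeneous [Finite C] :
    ∀ {k : ℕ} (c : (Fin k → ℕ) → C), ∃ g : ℕ → ℕ, StrictMono g ∧ IsHomogeneous c g
  | 0, c => ⟨id, strictMono_id, fun s t _ _ => congrArg c (Subsingleton.elim _ _)⟩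
  | k + 1, c => by
    obtain ⟨x, hx, hend⟩ := exists_strictMono_endHomogeneous (c := c)
      fun c' => exists_strictMono_isHomogeneous c'
    -- the colour of a tuple from `x` is fixed by its first entry; keep the entries of one colour
    let colour (m : ℕ) : C := c (Fin.cons (x m) (x ∘ fun i : Fin k => m + 1 + i))
    obtain ⟨b, hb⟩ := Finite.exists_infinite_fiber colour
    have hS : (Set.ofPred fun m => colour m = b).Infinite := Set.infinite_coe_iff.mp hb
    let σ := Nat.nth fun m => colour m = b
    have hσ : StrictMono σ := Nat.nth_strictMono hS
    suffices h : ∀ s : Fin (k + 1) → ℕ, StrictMono s → c ((x ∘ σ) ∘ s) = b from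
      ⟨x ∘ σ, hx.comp hσ, fun s t hs ht => (h s hs).trans (h t ht).symm⟩
    intro s hs
    rw [← Fin.cons_self_tail ((x ∘ σ) ∘ s)]
    have := hend (σ (s 0)) _ (fun i => σ (s 0) + 1 + i) (hσ.comp (hs.comp Fin.strictMono_succ))
      (fun _ _ h => by simpa using h) (fun i => hσ (hs (Fin.succ_pos i))) (fun i => by omega)
    exact this.trans (Nat.nth_mem_of_infinite hS (s 0))

end Ramsey

section Compactness

variable {γ : Type (max u v)}

theorem exists_model_realize_of_finite (A : Set (L.Formula γ))
    (h : ∀ s : Finset (L.Formula γ), ↑s ⊆ A →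
      ∃ (M : Theory.ModelType.{u, v, max u v} T) (x : γ → M), ∀ χ ∈ s, χ.Realize x) :
    ∃ (M : Theory.ModelType.{u, v, max u v} T) (x : γ → M), ∀ χ ∈ A, χ.Realize x := by
  classical
  -- the variables become new constants, and `A` a set of sentences about them
  have hsat : ((L.lhomWithConstants γ).onTheory T ∪ Formula.equivSentence '' A).IsSatisfiable := by
    rw [Theory.isSatisfiable_iff_isFinitelySatisfiable]
    intro T₀ hT₀
    obtain ⟨M, x, hx⟩ := h ((T₀.image Formula.equivSentence.symm).filter (· ∈ A))
      (by intro χ; simp only [Finset.coe_filter]; exact And.right)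
    let _ : (constantsOn γ).Structure M := constantsOn.structure x
    have hMT : (M : Type (max u v)) ⊨ (L.lhomWithConstants γ).onTheory T :=
      (LHom.onTheory_model _ _).2 inferInstance
    have : (M : Type (max u v)) ⊨ (T₀ : L[[γ]].Theory) := ⟨fun σ hσ => by
      rcases hT₀ hσ with hσT | ⟨χ, hχA, rfl⟩
      · exact hMT.realize_of_mem σ hσT
      · exact (Formula.realize_equivSentence M χ).2 (hx χ (by simpa using ⟨⟨_, hσ, by simp⟩, hχA⟩))⟩
    exact ⟨Theory.ModelType.of _ M⟩
  obtain ⟨N⟩ := hsat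
  let _ : L.Structure N := (L.lhomWithConstants γ).reduct N
  have _ : (L.lhomWithConstants γ).IsExpansionOn N := LHom.isExpansionOn_reduct _ _
  have _ : (N : Type (max u v)) ⊨ T :=
    (LHom.onTheory_model _ _).1 (N.is_model.mono Set.subset_union_left)
  exact ⟨⟨N⟩, fun c => (L.con c : N), fun χ hχ =>
    (Formula.realize_equivSentence _ _).1 (N.is_model.realize_of_mem _ (Or.inr ⟨χ, hχ, rfl⟩))⟩

theorem exists_model_realize_of_eventually {ι : Type*} {l : Filter ι} [l.NeBot]
    (A : Set (L.Formula γ)) (M : Theory.ModelType.{u, v, max u v} T) (x : ι → γ → M)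
    (h : ∀ χ ∈ A, ∀ᶠ i in l, χ.Realize (x i)) :
    ∃ (N : Theory.ModelType.{u, v, max u v} T) (y : γ → N), ∀ χ ∈ A, χ.Realize y :=
  exists_model_realize_of_finite T A fun s hs =>
    let ⟨i, hi⟩ := (s.eventually_all.2 fun χ hχ => h χ (hs hχ)).exists
    ⟨M, x i, hi⟩

end Compactness

section Indiscernible

variable {M : Type w} [L.Structure M] {γ : Type*} {I K : Type*} [LinearOrder I] [LinearOrder K]

theorem IsIndiscernible.relabel {a : I → γ → M} (ha : IsIndiscernible (L := L) a) {δ : Type*}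
    (f : δ → γ) : IsIndiscernible (L := L) fun i => a i ∘ f := by
  intro n i j hi hj ψ
  have := ha n i j hi hj (ψ.relabel (Prod.map id f))
  rwa [Formula.realize_relabel, Formula.realize_relabel] at this

theorem IsIndiscernible.comp_strictAnti {a : I → γ → M} (ha : IsIndiscernible (L := L) a)
    {f : K → I} (hf : StrictAnti f) : IsIndiscernible (L := L) (a ∘ f) := by
  intro n i j hi hj ψ
  have := ha n (f ∘ i ∘ Fin.rev) (f ∘ j ∘ Fin.rev)
    ((hf.comp_strictMono hi).comp Fin.rev_strictAnti)
    ((hf.comp_strictMono hj).comp Fin.rev_strictAnti) (ψ.relabel (Prod.map Fin.rev id))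
  simpa [Formula.realize_relabel, Function.comp_def] using this

def subMatrix {J : Type*} (e : I → I → γ → M) (w : J → I) : (J × J) × γ → M :=
  fun p => e (w p.1.1) (w p.1.2) p.2

def IsMatrixIndiscernible (e : I → I → γ → M) : Prop :=
  ∀ (k : ℕ) (w w' : Fin k → I), StrictMono w → StrictMono w' →
    ∀ ψ : L.Formula ((Fin k × Fin k) × γ), ψ.Realize (subMatrix e w) ↔ ψ.Realize (subMatrix e w')

namespace IsMatrixIndiscernible

variable {e : I → I → γ → M}

theorem realize_iff (he : IsMatrixIndiscernible (L := L) e) {J : Type*} [LinearOrder J] [Fintype J]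
    {w w' : J → I} (hw : StrictMono w) (hw' : StrictMono w') (ψ : L.Formula ((J × J) × γ)) :
    ψ.Realize (subMatrix e w) ↔ ψ.Realize (subMatrix e w') := by
  let σ := Fintype.orderIsoFinOfCardEq J rfl
  have := he _ (w ∘ σ) (w' ∘ σ) (hw.comp σ.strictMono) (hw'.comp σ.strictMono)
    (ψ.relabel (Prod.map (Prod.map σ.symm σ.symm) id))
  unfold subMatrix at this ⊢
  simpa [Formula.realize_relabel, Function.comp_def] using this

theorem isIndiscernible_row (he : IsMatrixIndiscernible (L := L) e) (r : I) {c : K → I}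
    (hc : StrictMono c) (hrc : ∀ k, r < c k) :
    IsIndiscernible (L := L) fun k => e r (c k) := by
  intro n i j hi hj ψ
  have hw : ∀ i : Fin n → K, StrictMono i → StrictMono (Fin.cons r (c ∘ i) : Fin (n + 1) → I) :=
    fun i hi => Fin.strictMono_cons.2 ⟨fun _ => hrc _, hc.comp hi⟩
  have := he (n + 1) _ _ (hw i hi) (hw j hj) (ψ.relabel fun p => ((0, p.1.succ), p.2))
  simpa [Formula.realize_relabel, subMatrix, Function.comp_def] using this

theorem isIndiscernible_blocks (he : IsMatrixIndiscernible (L := L) e) {r c : K → I}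
    (hrc : ∀ k, r k < c k) (hcr : ∀ k k', k < k' → c k < r k') :
    IsIndiscernible (L := L) fun k => e (r k) (c k) := by
  intro n i j hi hj ψ
  let w (i : Fin n → K) (t : Lex (Fin n × Bool)) : I :=
    if (ofLex t).2 then c (i (ofLex t).1) else r (i (ofLex t).1)
  have hw : ∀ i : Fin n → K, StrictMono i → StrictMono (w i) := by
    intro i hi t t' htt'
    obtain ⟨⟨s, b⟩, rfl⟩ := toLex.surjective t
    obtain ⟨⟨s', b'⟩, rfl⟩ := toLex.surjective t'
    rcases Prod.Lex.toLex_lt_toLex.1 htt' with hs | ⟨rfl, hb⟩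
    · have := hcr _ _ (hi hs)
      cases b <;> cases b' <;> simp only [w, ofLex_toLex] <;>
        grind [hrc (i s), hrc (i s')]
    · cases b <;> cases b' <;> dsimp only at hb <;>
        first | exact absurd hb (by decide) | simp [w, hrc]
  have := he.realize_iff (hw i hi) (hw j hj)
    (ψ.relabel fun p => ((toLex (p.1, false), toLex (p.1, true)), p.2))
  simpa [Formula.realize_relabel, subMatrix, Function.comp_def, w] using this

end IsMatrixIndiscernible

end Indiscernible

section EhrenfeuchtMostowski

variable {M : Type w} [L.Structure M] {γ : Type*} {k : ℕ}

def entryVar (w : Fin k → ℤ) : (Fin k × Fin k) × γ → ℤ × ℤ × γ :=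
  fun p => (w p.1.1, w p.1.2, p.2)

/-- Axioms, in constants `(i, j, z)` for the entries of a `ℤ × ℤ` matrix, saying that the matrix
is indiscernible and satisfies every formula that holds of all increasing submatrices of `e`. -/
def emAxioms (e : ℕ → ℕ → γ → M) : Set (L.Formula (ℤ × ℤ × γ)) :=
  {χ | ∃ (k : ℕ) (w w' : Fin k → ℤ) (ψ : L.Formula ((Fin k × Fin k) × γ)),
      StrictMono w ∧ StrictMono w' ∧ χ = (ψ.relabel (entryVar w)).iff (ψ.relabel (entryVar w'))} ∪
  {χ | ∃ (k : ℕ) (w : Fin k → ℤ) (ψ : L.Formula ((Fin k × Fin k) × γ)), StrictMono w ∧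
      (∀ v : Fin k → ℕ, StrictMono v → ψ.Realize (subMatrix e v)) ∧ χ = ψ.relabel (entryVar w)}

theorem emAxioms_subset {e : ℕ → ℕ → γ → M} {g : ℕ → ℕ} (hg : StrictMono g) :
    emAxioms (L := L) e ⊆ emAxioms fun i j => e (g i) (g j) := by
  rintro χ (hχ | ⟨k, w, ψ, hw, hψ, rfl⟩)
  · exact Or.inl hχ
  · exact Or.inr ⟨k, w, ψ, hw, fun v hv => hψ (g ∘ v) (hg.comp hv), rfl⟩

def shiftAssign (e : ℕ → ℕ → γ → M) (n : ℕ) : ℤ × ℤ × γ → M :=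
  fun p => e (p.1 + n).toNat (p.2.1 + n).toNat p.2.2

theorem realize_relabel_entryVar_shiftAssign (e : ℕ → ℕ → γ → M) (n : ℕ) (w : Fin k → ℤ)
    (ψ : L.Formula ((Fin k × Fin k) × γ)) :
    (ψ.relabel (entryVar w)).Realize (shiftAssign e n) ↔
      ψ.Realize (subMatrix e fun t => (w t + n).toNat) :=
  Formula.realize_relabel

theorem eventually_strictMono_toNat_add {w : Fin k → ℤ} (hw : StrictMono w) :
    ∀ᶠ n : ℕ in atTop, StrictMono fun t => (w t + n).toNat := by
  have : ∀ᶠ n : ℕ in atTop, ∀ t, 0 ≤ w t + n :=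
    eventually_all.2 fun t => (eventually_ge_atTop (w t).natAbs).mono fun n hn => by omega
  refine this.mono fun n hn t t' htt' => ?_
  have := hw htt'
  exact (Int.toNat_lt_toNat (by linarith [hn t])).2 (by linarith)

theorem exists_eventually_realize_of_mem_emAxioms {e : ℕ → ℕ → γ → M} {χ : L.Formula (ℤ × ℤ × γ)}
    (hχ : χ ∈ emAxioms e) :
    ∃ g : ℕ → ℕ, StrictMono g ∧ ∀ h : ℕ → ℕ, StrictMono h →
      ∀ᶠ n in atTop, χ.Realize (shiftAssign (fun i j => e (g (h i)) (g (h j))) n) := by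
  rcases hχ with ⟨k, w, w', ψ, hw, hw', rfl⟩ | ⟨k, w, ψ, hw, hψ, rfl⟩
  · obtain ⟨g, hg, hhom⟩ := exists_strictMono_isHomogeneous fun v => ψ.Realize (subMatrix e v)
    refine ⟨g, hg, fun h hh => ?_⟩
    filter_upwards [eventually_strictMono_toNat_add hw, eventually_strictMono_toNat_add hw']
      with n hn hn'
    rw [Formula.realize_iff, realize_relabel_entryVar_shiftAssign,
      realize_relabel_entryVar_shiftAssign]
    exact iff_of_eq (hhom _ _ (hh.comp hn) (hh.comp hn'))
  · refine ⟨id, strictMono_id, fun h hh => ?_⟩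
    filter_upwards [eventually_strictMono_toNat_add hw] with n hn
    rw [realize_relabel_entryVar_shiftAssign]
    exact hψ _ (hh.comp hn)

theorem exists_eventually_realize_of_subset_emAxioms (e : ℕ → ℕ → γ → M)
    (s : Finset (L.Formula (ℤ × ℤ × γ))) (hs : ↑s ⊆ emAxioms (L := L) e) :
    ∃ g : ℕ → ℕ, StrictMono g ∧ ∀ h : ℕ → ℕ, StrictMono h →
      ∀ᶠ n in atTop, ∀ χ ∈ s, χ.Realize (shiftAssign (fun i j => e (g (h i)) (g (h j))) n) := by
  classical
  induction s using Finset.induction_on with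
  | empty => exact ⟨id, strictMono_id, fun _ _ => by simp⟩
  | insert χ s _ ih =>
    rw [Finset.coe_insert, Set.insert_subset_iff] at hs
    obtain ⟨g₀, hg₀, hs₀⟩ := ih hs.2
    obtain ⟨g₁, hg₁, hχ⟩ := exists_eventually_realize_of_mem_emAxioms (emAxioms_subset hg₀ hs.1)
    refine ⟨g₀ ∘ g₁, hg₀.comp hg₁, fun h hh => ?_⟩
    filter_upwards [hs₀ (g₁ ∘ h) (hg₁.comp hh), hχ h hh] with n hn hn'
    simpa [Finset.forall_mem_insert] using ⟨hn', hn⟩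

/-- Ehrenfeucht–Mostowski extraction of an indiscernible matrix. -/
theorem exists_isMatrixIndiscernible {γ : Type (max u v)} (M : Theory.ModelType.{u, v, max u v} T)
    (e : ℕ → ℕ → γ → M) :
    ∃ (N : Theory.ModelType.{u, v, max u v} T) (e' : ℤ → ℤ → γ → N),
      IsMatrixIndiscernible (L := L) e' ∧ ∀ (k : ℕ) (ψ : L.Formula ((Fin k × Fin k) × γ)),
        (∀ v : Fin k → ℕ, StrictMono v → ψ.Realize (subMatrix e v)) →
          ∀ w : Fin k → ℤ, StrictMono w → ψ.Realize (subMatrix e' w) := by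
  obtain ⟨N, x, hx⟩ := exists_model_realize_of_finite T (emAxioms e) fun s hs => by
    obtain ⟨g, -, hg⟩ := exists_eventually_realize_of_subset_emAxioms e s hs
    obtain ⟨n, hn⟩ := (hg id strictMono_id).exists
    exact ⟨M, _, hn⟩
  refine ⟨N, fun i j z => x (i, j, z), fun k w w' hw hw' ψ => ?_, fun k ψ hψ w hw => ?_⟩
  · have := hx _ (Or.inl ⟨k, w, w', ψ, hw, hw', rfl⟩)
    rwa [Formula.realize_iff, Formula.realize_relabel, Formula.realize_relabel] at this
  · have := hx _ (Or.inr ⟨k, w, ψ, hw, hψ, rfl⟩)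
    rwa [Formula.realize_relabel] at this

end EhrenfeuchtMostowski

section PairVar

variable {α β : Type*} {N : Type w} [L.Structure N] {I J : Type*}

def pairVar (s t s' t' : J) : α ⊕ β → (J × J) × (α ⊕ β) :=
  Sum.elim (fun x => ((s, t), Sum.inl x)) (fun y => ((s', t'), Sum.inr y))

theorem realize_relabel_pairVar (a : I → I → α → N) (b : I → I → β → N) (w : J → I)
    (s t s' t' : J) (ψ : L.Formula (α ⊕ β)) :
    (ψ.relabel (pairVar s t s' t')).Realize (subMatrix (fun i j => Sum.elim (a i j) (b i j)) w) ↔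
      ψ.Realize (Sum.elim (a (w s) (w t)) (b (w s') (w t'))) := by
  rw [Formula.realize_relabel]
  exact iff_of_eq (congrArg _ (funext fun z => by cases z <;> rfl))

theorem IsMatrixIndiscernible.typeOf_eq [LinearOrder I] {a : I → I → α → N} {b : I → I → β → N}
    (h : IsMatrixIndiscernible (L := L) fun i j => Sum.elim (a i j) (b i j)) {k : ℕ}
    {w w' : Fin k → I} (hw : StrictMono w) (hw' : StrictMono w') (s t s' t' : Fin k) :
    typeOf (L := L) (Sum.elim (a (w s) (w t)) (b (w s') (w t'))) =
      typeOf (Sum.elim (a (w' s) (w' t)) (b (w' s') (w' t'))) := by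
  ext ψ
  simpa only [typeOf, Set.mem_ofPred_eq, realize_relabel_pairVar] using
    h k w w' hw hw' (ψ.relabel (pairVar s t s' t'))

end PairVar

theorem exists_indiscernible_msMatrix {α β : Type (max u v)} {φ : L.Formula (α ⊕ β)}
    (M : Theory.ModelType.{u, v, max u v} T) (a : ℕ → ℕ → α → M) (b : ℕ → ℕ → β → M)
    (hφ : ∀ i j l : ℕ, φ.Realize (Sum.elim (a i j) (b i l)) ↔ j = l)
    (htype : ∀ i j k l : ℕ, i < k → j < l →
      typeOf (L := L) (Sum.elim (a i j) (b i j)) = typeOf (Sum.elim (a i j) (b k l))) :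
    ∃ (N : Theory.ModelType.{u, v, max u v} T) (a' : ℤ → ℤ → α → N) (b' : ℤ → ℤ → β → N),
      IsMatrixIndiscernible (L := L) (fun i j => Sum.elim (a' i j) (b' i j)) ∧
      φ.Realize (Sum.elim (a' 0 1) (b' 0 1)) ∧ ¬ φ.Realize (Sum.elim (a' 0 2) (b' 0 1)) ∧
      ∀ i j k l : ℤ, i < j → j < k → k < l →
        typeOf (L := L) (Sum.elim (a' i j) (b' k l)) = typeOf (Sum.elim (a' i j) (b' i j)) := by
  obtain ⟨N, e, he, hEM⟩ := exists_isMatrixIndiscernible T M fun i j => Sum.elim (a i j) (b i j)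
  obtain ⟨a', b', rfl⟩ : ∃ (a' : ℤ → ℤ → α → N) (b' : ℤ → ℤ → β → N),
      (fun i j => Sum.elim (a' i j) (b' i j)) = e :=
    ⟨_, _, funext₂ fun i j => Sum.elim_comp_inl_inr (e i j)⟩
  refine ⟨N, a', b', he, ?_, ?_, fun i j k l hij hjk hkl => ?_⟩
  · have := hEM 2 (φ.relabel (pairVar 0 1 0 1)) (fun v _ => by
      rw [realize_relabel_pairVar, hφ]) ![0, 1] (by simp)
    rwa [realize_relabel_pairVar] at this
  · have := hEM 3 (φ.relabel (pairVar 0 2 0 1)).not (fun v hv => by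
      rw [Formula.realize_not, realize_relabel_pairVar, hφ]
      exact (hv (show (1 : Fin 3) < 2 by decide)).ne') ![0, 1, 2] (by simp)
    rwa [Formula.realize_not, realize_relabel_pairVar] at this
  · ext ψ
    have := hEM 4 ((ψ.relabel (pairVar 0 1 2 3)).iff (ψ.relabel (pairVar 0 1 0 1))) (fun v hv => by
      rw [Formula.realize_iff, realize_relabel_pairVar, realize_relabel_pairVar]
      exact (Set.ext_iff.1 (htype _ _ _ _ (hv (show (0 : Fin 4) < 2 by decide))
        (hv (show (1 : Fin 4) < 3 by decide))) ψ).symm) ![i, j, k, l] (by simp [hij, hjk, hkl])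
    rwa [Formula.realize_iff, realize_relabel_pairVar, realize_relabel_pairVar] at this

theorem exists_pf_cycle_of_isMatrixIndiscernible {α β : Type*} {φ : L.Formula (α ⊕ β)}
    (N : Theory.ModelType.{u, v, max u v} T) (a : ℤ → ℤ → α → N) (b : ℤ → ℤ → β → N)
    (hind : IsMatrixIndiscernible (L := L) fun i j => Sum.elim (a i j) (b i j))
    (hφ : φ.Realize (Sum.elim (a 0 1) (b 0 1))) (hφ' : ¬ φ.Realize (Sum.elim (a 0 2) (b 0 1)))
    (htype : ∀ i j k l : ℤ, i < j → j < k → k < l →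
      typeOf (L := L) (Sum.elim (a i j) (b k l)) = typeOf (Sum.elim (a i j) (b i j))) :
    ∃ p q : Set (L.Formula (α ⊕ β)),
      IsRealizedType T p ∧ IsRealizedType T q ∧ p ≠ q ∧ Pf T p q ∧ Pf T q p := by
  have hdiag : ∀ i j : ℤ, i < j → typeOf (L := L) (Sum.elim (a i j) (b i j)) =
      typeOf (Sum.elim (a 0 1) (b 0 1)) := fun i j hij =>
    hind.typeOf_eq (w := ![i, j]) (w' := ![0, 1]) (by simp [hij]) (by simp) 0 1 0 1
  have hrow : ∀ m : ℤ, 1 < m → typeOf (L := L) (Sum.elim (a 0 m) (b 0 1)) =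
      typeOf (Sum.elim (a 0 2) (b 0 1)) := fun m hm =>
    hind.typeOf_eq (w := ![0, 1, m]) (w' := ![0, 1, 2]) (by simp [hm]) (by simp) 0 2 0 1
  refine ⟨_, _, ⟨N, _, rfl⟩, ⟨N, _, rfl⟩, fun h => hφ' (h ▸ hφ : φ ∈ typeOf _), ?_, ?_⟩
  · -- the blocks `(-3m, 2 - 3m)` lie below `b 0 1`, and `a 0 2` heads them as the block `m = 0`
    refine ⟨N, b 0 1, fun m : ℕ => a (3 * -m) (3 * -m + 2), ?_, fun m hm => ?_, by simp⟩
    · exact ((hind.isIndiscernible_blocks (r := fun z => 3 * z) (c := fun z => 3 * z + 2)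
        (fun _ => by omega) (fun _ _ _ => by omega)).comp_strictAnti
        (f := fun m : ℕ => -(m : ℤ)) fun _ _ h => by simpa using h).relabel Sum.inl
    · rw [htype _ _ _ _ (by omega) (by omega) (by omega), hdiag _ _ (by omega)]
  · refine ⟨N, b 0 1, fun m : ℕ => a 0 (m + 1), ?_, fun m hm => hrow _ (by omega), by simp⟩
    exact (hind.isIndiscernible_row 0 (c := fun m : ℕ => (m : ℤ) + 1)
      (fun _ _ h => by simpa using h) (fun _ => by omega)).relabel Sum.inl

section Equations

section Window

variable {α β : Type*} [Finite β] {M : Type w} [L.Structure M]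

noncomputable def windowFormula (φ : L.Formula (α ⊕ β)) (J : ℕ) : L.Formula (Fin (J + 1) × α) :=
  Formula.iExs β ((φ.relabel (Sum.map (Prod.mk 0) id)).not ⊓
    Formula.iInf fun t : Fin J => φ.relabel (Sum.map (Prod.mk t.succ) id))

theorem realize_windowFormula (φ : L.Formula (α ⊕ β)) (J : ℕ) (u : Fin (J + 1) × α → M) :
    (windowFormula φ J).Realize u ↔ ∃ y : β → M, ¬ φ.Realize (Sum.elim (fun x => u (0, x)) y) ∧
      ∀ t : Fin J, φ.Realize (Sum.elim (fun x => u (t.succ, x)) y) := by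
  simp only [windowFormula, Formula.realize_iExs, Formula.realize_inf, Formula.realize_not,
    Formula.realize_iInf, Formula.realize_relabel, Sum.elim_comp_map]
  rfl

theorem IsIndiscernible.exists_window_witness {φ : L.Formula (α ⊕ β)} {a : ℕ → α → M}
    (ha : IsIndiscernible (L := L) a) {b : β → M}
    (hpos : ∀ i, 0 < i → φ.Realize (Sum.elim (a i) b)) (h0 : ¬ φ.Realize (Sum.elim (a 0) b))
    (n J : ℕ) : ∃ y : β → M, ¬ φ.Realize (Sum.elim (a n) y) ∧
      ∀ j, n < j → j ≤ n + J → φ.Realize (Sum.elim (a j) y) := by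
  have := (ha (J + 1) (fun t => n + t) Fin.val (fun _ _ h => by simpa using h) Fin.val_strictMono
    (windowFormula φ J)).2 ((realize_windowFormula φ J _).2 ⟨b, h0, fun t => hpos _ t.succ_pos⟩)
  obtain ⟨y, hy0, hy⟩ := (realize_windowFormula φ J _).1 this
  refine ⟨y, by simpa using hy0, fun j hnj hjJ => ?_⟩
  obtain ⟨t, rfl⟩ : ∃ t : Fin J, j = n + t.succ := ⟨⟨j - n - 1, by omega⟩, by simp; omega⟩
  exact hy t

end Window

theorem not_isEquation_of_staircase {α β : Type*} {φ : L.Formula (α ⊕ β)}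
    (N : Theory.ModelType.{u, v, max u v} T) (a : ℕ → α → N) (b : ℕ → β → N)
    (hlt : ∀ n j, n < j → φ.Realize (Sum.elim (a j) (b n)))
    (hdiag : ∀ n, ¬ φ.Realize (Sum.elim (a n) (b n))) : ¬ IsEquation T φ := by
  classical
  intro h
  have hinter : ∀ n, (⋂ c ∈ (Finset.range n).image b, instSet φ c) =
      ⋂ m ∈ Finset.range n, instSet φ (b m) :=
    fun n => Finset.set_biInter_finset_image
  obtain ⟨n₀, hn₀⟩ := h N (fun n => (Finset.range n).image b) (fun n n' hnn' => by
    simp only [hinter]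
    exact Set.biInter_subset_biInter_left (by simpa using hnn'))
  have hmem : a n₀ ∈ ⋂ m ∈ Finset.range n₀, instSet φ (b m) :=
    Set.mem_iInter₂.2 fun m hm => hlt m n₀ (Finset.mem_range.1 hm)
  rw [← hinter, ← hn₀ (n₀ + 1) n₀.le_succ, hinter] at hmem
  exact hdiag n₀ (Set.mem_iInter₂.1 hmem n₀ (Finset.mem_range.2 n₀.lt_succ_self))

variable {α β : Type (max u v)}

theorem exists_staircase_of_pf [Finite β] {φ : L.Formula (α ⊕ β)} {p q : Set (L.Formula (α ⊕ β))}
    (hpq : Pf T p q) (hp : φ ∈ p) (hq : φ ∉ q) :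
    ∃ (N : Theory.ModelType.{u, v, max u v} T) (a : ℕ → α → N) (b : ℕ → β → N),
      (∀ n j, n < j → φ.Realize (Sum.elim (a j) (b n))) ∧
        ∀ n, ¬ φ.Realize (Sum.elim (a n) (b n)) := by
  obtain ⟨M, b, a, ha, hpos, h0⟩ := hpq
  choose y hy0 hy using ha.exists_window_witness (b := b) (φ := φ)
    (fun i hi => by rw [← hpos i hi] at hp; exact hp) (fun h => hq (by rw [← h0]; exact h))
  let atPair (j n : ℕ) : L.Formula ((ℕ × α) ⊕ (ℕ × β)) :=
    φ.relabel (Sum.map (Prod.mk j) (Prod.mk n))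
  have realize_atPair : ∀ {N : Type (max u v)} [L.Structure N] (j n : ℕ) (A : ℕ × α → N)
      (B : ℕ × β → N), (atPair j n).Realize (Sum.elim A B) ↔
        φ.Realize (Sum.elim (fun x => A (j, x)) (fun z => B (n, z))) := fun j n A B => by
    simp only [atPair, Formula.realize_relabel, Sum.elim_comp_map]
    rfl
  obtain ⟨N, x, hx⟩ := exists_model_realize_of_eventually T (l := atTop)
    ({χ | ∃ n j, n < j ∧ χ = atPair j n} ∪ Set.range fun n => (atPair n n).not) M
    (fun J => Sum.elim (fun p => a p.1 p.2) (fun p => y p.1 J p.2)) (by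
      rintro χ (⟨n, j, hnj, rfl⟩ | ⟨n, rfl⟩)
      · filter_upwards [eventually_ge_atTop j] with J hJ
        exact (realize_atPair _ _ _ _).2 (hy n J j hnj (by omega))
      · exact Eventually.of_forall fun J =>
          Formula.realize_not.2 fun h => hy0 n J ((realize_atPair _ _ _ _).1 h))
  refine ⟨N, fun j x' => x (Sum.inl (j, x')), fun n z => x (Sum.inr (n, z)), fun n j hnj => ?_,
    fun n h => ?_⟩
  · rw [← Sum.elim_comp_inl_inr x] at hx
    exact (realize_atPair _ _ _ _).1 (hx _ (Or.inl ⟨n, j, hnj, rfl⟩))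
  · rw [← Sum.elim_comp_inl_inr x] at hx
    exact Formula.realize_not.1 (hx _ (Or.inr ⟨n, rfl⟩)) ((realize_atPair _ _ _ _).2 h)

theorem IsEquation.mem_of_pf [Finite β] {φ : L.Formula (α ⊕ β)} (h : IsEquation T φ)
    {p q : Set (L.Formula (α ⊕ β))} (hpq : Pf T p q) (hp : φ ∈ p) : φ ∈ q := by
  by_contra hq
  obtain ⟨N, a, b, hlt, hdiag⟩ := exists_staircase_of_pf T hpq hp hq
  exact not_isEquation_of_staircase T N a b hlt hdiag h

end Equations

theorem IsEquation.relabel {α β α' β' : Type*} {φ : L.Formula (α ⊕ β)} (h : IsEquation T φ)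
    (ea : α ≃ α') (eb : β ≃ β') : IsEquation T (φ.relabel (Sum.map ea eb)) := by
  classical
  intro M B hB
  let π : (α' → M) → (α → M) := (· ∘ ea)
  have hπ : Function.Surjective π := fun x => ⟨x ∘ ea.symm, by funext; simp [π]⟩
  have hinter : ∀ n, (⋂ c ∈ B n, instSet (φ.relabel (Sum.map ea eb)) c) =
      π ⁻¹' ⋂ c ∈ (B n).image (· ∘ eb), instSet φ c := fun n => by
    rw [Finset.set_biInter_finset_image, Set.preimage_iInter₂]
    simp only [instSet, Formula.realize_relabel, Sum.elim_comp_map]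
    rfl
  simp only [hinter] at hB ⊢
  obtain ⟨n₀, hn₀⟩ := h M (fun n => (B n).image (· ∘ eb))
    fun n n' hnn' => (hπ.preimage_subset_preimage_iff).1 (hB hnn')
  exact ⟨n₀, fun n hn => congrArg (π ⁻¹' ·) (hn₀ n hn)⟩

theorem IsBoolCombOfEquations.relabel {α β α' β' : Type*} {χ : L.Formula (α ⊕ β)}
    (h : IsBoolCombOfEquations T χ) (ea : α ≃ α') (eb : β ≃ β') :
    IsBoolCombOfEquations T (χ.relabel (Sum.map ea eb)) := by
  induction h with
  | of_equation φ hφ => exact .of_equation _ (hφ.relabel T ea eb)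
  | not φ _ ih => exact .not _ ih
  | inf φ ψ _ _ ihφ ihψ => exact .inf _ _ ihφ ihψ
  | sup φ ψ _ _ ihφ ihψ => exact .sup _ _ ihφ ihψ

theorem IsEquational.exists_isBoolCombOfEquations {α β : Type*} [Finite α] [Finite β]
    (hT : IsEquational T) (ψ : L.Formula (α ⊕ β)) :
    ∃ χ : L.Formula (α ⊕ β), IsBoolCombOfEquations T χ ∧
      ∀ (M : Theory.ModelType.{u, v, max u v} T) (x : α ⊕ β → M), ψ.Realize x ↔ χ.Realize x := by
  obtain ⟨n, ⟨ea⟩⟩ := Finite.exists_equiv_fin α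
  obtain ⟨m, ⟨eb⟩⟩ := Finite.exists_equiv_fin β
  obtain ⟨χ, hχ, hψχ⟩ := hT n m (ψ.relabel (Sum.map ea eb))
  refine ⟨χ.relabel (Sum.map ea.symm eb.symm), hχ.relabel T ea.symm eb.symm, fun M x => ?_⟩
  have : (ψ.relabel (Sum.map ea eb)).Realize (x ∘ Sum.map ea.symm eb.symm) ↔
      χ.Realize (x ∘ Sum.map ea.symm eb.symm) :=
    BoundedFormula.realize_iff.1 (hψχ M _ default)
  rwa [Formula.realize_relabel, Function.comp_assoc, Sum.map_comp_map, Equiv.symm_comp_self,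
    Equiv.symm_comp_self, Sum.map_id_id, Function.comp_id, ← Formula.realize_relabel] at this

theorem IsBoolCombOfEquations.mem_iff_of_pf {α β : Type (max u v)} [Finite β]
    {p q : Set (L.Formula (α ⊕ β))} (hpq : Pf T p q) (hqp : Pf T q p) {χ : L.Formula (α ⊕ β)}
    (hχ : IsBoolCombOfEquations T χ) : χ ∈ p ↔ χ ∈ q := by
  obtain ⟨M, b, a, -, hp, hq⟩ := id hpq
  have hp := hp 1 one_pos
  subst hp hq
  induction hχ with
  | of_equation φ hφ => exact ⟨hφ.mem_of_pf T hpq, hφ.mem_of_pf T hqp⟩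
  | not φ _ ih => exact not_congr ih
  | inf φ ψ _ _ ihφ ihψ =>
    simpa only [typeOf, Set.mem_ofPred_eq, Formula.realize_inf] using and_congr ihφ ihψ
  | sup φ ψ _ _ ihφ ihψ =>
    simpa only [typeOf, Set.mem_ofPred_eq, Formula.realize_sup] using or_congr ihφ ihψ

theorem not_isEquational_of_pf_cycle {α β : Type (max u v)} [Finite α] [Finite β]
    {p q : Set (L.Formula (α ⊕ β))} (hne : p ≠ q) (hpq : Pf T p q) (hqp : Pf T q p) :
    ¬ IsEquational T := by
  intro hT
  obtain ⟨M, b, a, -, hp, hq⟩ := id hpq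
  have hp := hp 1 one_pos
  subst hp hq
  refine hne (Set.ext fun ψ => ?_)
  obtain ⟨χ, hχ, hψχ⟩ := hT.exists_isBoolCombOfEquations T ψ
  exact (hψχ M _).trans ((hχ.mem_iff_of_pf T hpq hqp).trans (hψχ M _).symm)

theorem ms_criterion_not_equational {α β : Type (max u v)} [Finite α] [Finite β]
    (φ : L.Formula (α ⊕ β))
    (h : ∃ (M : Theory.ModelType.{u, v, max u v} T)
        (a : ℕ → ℕ → α → M) (b : ℕ → ℕ → β → M),
      (∀ i j l : ℕ, φ.Realize (Sum.elim (a i j) (b i l)) ↔ j = l) ∧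
        ∀ i j k l : ℕ, i < k → j < l →
          typeOf (L := L) (Sum.elim (a i j) (b i j)) = typeOf (Sum.elim (a i j) (b k l))) :
    (∃ p q : Set (L.Formula (α ⊕ β)),
      IsRealizedType T p ∧ IsRealizedType T q ∧ p ≠ q ∧ Pf T p q ∧ Pf T q p) ∧
      ¬ IsEquational T := by
  obtain ⟨M, a, b, hφ, htype⟩ := h
  obtain ⟨N, a', b', hind, hφ₀₁, hφ₀₂, htype'⟩ :=
    exists_indiscernible_msMatrix T M a b hφ htype
  obtain ⟨p, q, hp, hq, hne, hpq, hqp⟩ :=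
    exists_pf_cycle_of_isMatrixIndiscernible T N a' b' hind hφ₀₁ hφ₀₂ htype'
  exact ⟨⟨p, q, hp, hq, hne, hpq, hqp⟩, not_isEquational_of_pf_cycle T hne hpq hqp⟩

end Equationality
end
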